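/- arXiv:1811.11058 — 8 statements merged into one kernel-verified Lean document; each statement's English description precedes it below -/
import Mathlib

section
/- In the edge contraction G/e₀ of a finite transitive non-cycle directed graph G at an edge e₀ whose range has in-degree 1, every vertex other than r(e₀) has the same in-degree as it has in G. -/
/-- `l` is a nonempty directed path with range `tgt` and source `src`. -/
def IsPathFrom {V E : Type*} (r s : E → V) (l : List E) (src tgt : V) : Prop :=
  List.Chain' (fun e f => s e = r f) l ∧
    l.head?.map r = some tgt ∧ l.getLast?.map s = some src

/-- The graph `(V, E, r, s)` is an `n`-cycle for some `n > 0`. -/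
def IsCycleGraph {V E : Type*} (r s : E → V) : Prop :=
  ∃ n : ℕ, 0 < n ∧ ∃ (fv : ZMod n ≃ V) (fe : ZMod n ≃ E),
    ∀ i : ZMod n, s (fe i) = fv i ∧ r (fe i) = fv (i + 1)

/-- Range map of the edge contraction `G/e₀`. -/
noncomputable def contractR {V E : Type*} (r s : E → V) (e₀ : E) (hne : s e₀ ≠ r e₀) :
    {e : E // e ≠ e₀} → {v : V // v ≠ r e₀} :=
  fun e => @dite _ (r e.1 = r e₀) (Classical.dec _) (fun _ => ⟨s e₀, hne⟩) (fun h => ⟨r e.1, h⟩)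

/-- Source map of the edge contraction `G/e₀`. -/
noncomputable def contractS {V E : Type*} (r s : E → V) (e₀ : E) (hne : s e₀ ≠ r e₀) :
    {e : E // e ≠ e₀} → {v : V // v ≠ r e₀} :=
  fun e => @dite _ (s e.1 = r e₀) (Classical.dec _) (fun _ => ⟨s e₀, hne⟩) (fun h => ⟨s e.1, h⟩)

theorem stmt_5 {V E : Type*} [Finite V] [Finite E] (r s : E → V)
    (htrans : ∀ v w : V, ∃ l : List E, IsPathFrom r s l v w)
    (hnc : ¬ IsCycleGraph r s)
    (e₀ : E) (hdeg : Nat.card {e : E // r e = r e₀} = 1)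
    -- `s e₀ ≠ r e₀` in fact follows from the hypotheses above
    (hne : s e₀ ≠ r e₀) :
    ∀ v : {v : V // v ≠ r e₀},
      Nat.card {e : {e : E // e ≠ e₀} // contractR r s e₀ hne e = v} =
        Nat.card {e : E // r e = v.1} := by
  have key : ∀ e : E, r e = r e₀ → e = e₀ := by
    intro e he
    obtain ⟨x, hx⟩ := Nat.card_eq_one_iff_exists.mp hdeg
    have h1 := hx ⟨e, he⟩
    have h2 := hx ⟨e₀, rfl⟩
    have := h1.trans h2.symm
    exact Subtype.ext_iff.mp this
  intro v
  apply Nat.card_congr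
  refine ⟨fun e => ⟨e.1.1, ?_⟩, fun e => ⟨⟨e.1, fun h => v.2 ?_⟩, ?_⟩, ?_, ?_⟩
  · have hee : r e.1.1 ≠ r e₀ := fun h => e.1.2 (key _ h)
    have := e.2
    simp only [contractR, dif_neg hee] at this
    exact Subtype.ext_iff.mp this
  · rw [← e.2, h]
  · have hee : r e.1 ≠ r e₀ := fun h => v.2 (e.2 ▸ h)
    simp only [contractR, dif_neg hee]
    exact Subtype.ext e.2
  · intro e; rfl
  · intro e; rfl
end

section
/- Let G be a finite, transitive, in-degree d-regular graph with a strong edge coloring c, and suppose I ⊆ V is a minimal c-image (a c-image of smallest cardinality). Then for any word γ in the colors, I · γ is also a minimal c-image; in particular |I · γ| = |I|. -/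
theorem stmt_10 {V E : Type*} [Finite V] [Finite E] (r s : E → V)
    (htrans : ∀ v w : V, ∃ l : List E,
      List.Chain' (fun e f => s e = r f) l ∧
        l.head?.map r = some w ∧ l.getLast?.map s = some v)
    (d : ℕ) (hreg : ∀ v : V, Nat.card {e : E // r e = v} = d)
    (c : E → Fin d)
    (hstrong : ∀ e f : E, r e = r f → c e = c f → e = f)
    -- `act v γ` is the source of the unique backtracked path with range `v` and color `γ`
    (act : V → List (Fin d) → V)
    (hact : ∀ (v : V) (l : List E), List.Chain' (fun e f => s e = r f) l →
      (∀ h : l ≠ [], r (l.head h) = v) →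
      act v (l.map c) = (l.getLast?.map s).getD v)
    -- `I` is a minimal `c`-image
    (I : Set V) (hI : ∃ γ : List (Fin d), I = Set.range (fun v => act v γ))
    (hmin : ∀ J : Set V, (∃ γ : List (Fin d), J = Set.range (fun v => act v γ)) →
      Nat.card I ≤ Nat.card J)
    (γ : List (Fin d)) :
    (∃ μ : List (Fin d), (fun v => act v γ) '' I = Set.range (fun v => act v μ)) ∧
    (∀ J : Set V, (∃ μ : List (Fin d), J = Set.range (fun v => act v μ)) →
      Nat.card ((fun v => act v γ) '' I) ≤ Nat.card J) ∧
    Nat.card ((fun v => act v γ) '' I) = Nat.card I := by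
  classical
  -- existence of an edge of any color at any vertex
  have hedge : ∀ (v : V) (a : Fin d), ∃ e : E, r e = v ∧ c e = a := by
    intro v a
    have hinj : Function.Injective (fun e : {e : E // r e = v} => c e.1) := by
      intro e f h
      exact Subtype.ext (hstrong e.1 f.1 (e.2.trans f.2.symm) h)
    have hbij : Function.Bijective (fun e : {e : E // r e = v} => c e.1) := by
      rw [Nat.bijective_iff_injective_and_card]
      exact ⟨hinj, by simp [hreg v]⟩
    obtain ⟨e, he⟩ := hbij.2 a
    exact ⟨e.1, e.2, he⟩
  -- existence of a path with any range and color word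
  have hpath : ∀ (μ : List (Fin d)) (v : V), ∃ l : List E,
      List.Chain' (fun e f => s e = r f) l ∧
      (∀ h : l ≠ [], r (l.head h) = v) ∧ l.map c = μ := by
    intro μ
    induction μ with
    | nil => intro v; exact ⟨[], List.isChain_nil, by simp, rfl⟩
    | cons a μ ih =>
      intro v
      obtain ⟨e, her, hec⟩ := hedge v a
      obtain ⟨l, hch, hhd, hmap⟩ := ih (s e)
      refine ⟨e :: l, ?_, ?_, by simp [hec, hmap]⟩
      · cases l with
        | nil => exact List.isChain_singleton _
        | cons f l' =>
          exact List.isChain_cons_cons.mpr ⟨(hhd (by simp)).symm, hch⟩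
      · intro _; simpa using her
  have hact_nil : ∀ v : V, act v [] = v := by
    intro v
    have := hact v [] List.isChain_nil (by simp)
    simpa using this
  -- composition law
  have hcomp : ∀ (γ₁ γ₂ : List (Fin d)) (v : V),
      act v (γ₁ ++ γ₂) = act (act v γ₁) γ₂ := by
    intro γ₁ γ₂ v
    obtain ⟨l₁, hch₁, hhd₁, hmap₁⟩ := hpath γ₁ v
    have hw : act v γ₁ = (l₁.getLast?.map s).getD v := by
      rw [← hmap₁]; exact hact v l₁ hch₁ hhd₁
    set w := act v γ₁ with hwdef
    obtain ⟨l₂, hch₂, hhd₂, hmap₂⟩ := hpath γ₂ w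
    have hch : List.Chain' (fun e f => s e = r f) (l₁ ++ l₂) := by
      apply List.IsChain.append hch₁ hch₂
      intro x hx y hy
      have hx' : l₁ ≠ [] := by rintro rfl; simp at hx
      have hy' : l₂ ≠ [] := by rintro rfl; simp at hy
      have hxl : x = l₁.getLast hx' := by
        have := (List.getLast?_eq_getLast hx').symm.trans hx
        exact (Option.some_injective _ this).symm
      have hyl : y = l₂.head hy' := by
        have := (List.head?_eq_head hy' : _).symm.trans hy
        exact (Option.some_injective _ this).symm
      subst hxl hyl
      rw [hhd₂ hy']
      rw [hw, List.getLast?_eq_getLast hx']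
      simp
    have hhd : ∀ h : (l₁ ++ l₂) ≠ [], r ((l₁ ++ l₂).head h) = v := by
      intro h
      cases l₁ with
      | nil =>
        simp only [List.nil_append]
        have : w = v := by rw [hw]; simp
        rw [hhd₂ (by simpa using h), this]
      | cons e l' => simpa using hhd₁ (by simp)
    have key := hact v (l₁ ++ l₂) hch hhd
    rw [List.map_append, hmap₁, hmap₂] at key
    rw [key]
    rcases eq_or_ne l₂ [] with h2 | h2
    · subst h2
      have : γ₂ = [] := by simpa using hmap₂.symm
      subst this
      rw [hact_nil w, hw]; simp
    · rw [List.getLast?_append_of_ne_nil _ h2]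
      have := hact w l₂ hch₂ hhd₂
      rw [hmap₂] at this
      rw [this, List.getLast?_eq_getLast h2]
      simp
  obtain ⟨γI, hγI⟩ := hI
  have himage : (fun v => act v γ) '' I = Set.range (fun v => act v (γI ++ γ)) := by
    rw [hγI, ← Set.range_comp]
    exact congrArg Set.range (funext fun v => (hcomp γI γ v).symm)
  have hfin : I.Finite := Set.toFinite I
  have hle : Nat.card ((fun v => act v γ) '' I) ≤ Nat.card I := by
    rw [Nat.card_coe_set_eq, Nat.card_coe_set_eq]
    exact Set.ncard_image_le hfin
  have hge : Nat.card I ≤ Nat.card ((fun v => act v γ) '' I) :=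
    hmin _ ⟨γI ++ γ, himage⟩
  have heq : Nat.card ((fun v => act v γ) '' I) = Nat.card I := le_antisymm hle hge
  exact ⟨⟨γI ++ γ, himage⟩, fun J hJ => heq ▸ hmin J hJ, heq⟩
end

section
/- Let G be a finite, transitive, in-degree d-regular, p-periodic graph with cyclic decomposition V = V₁ ⊔ ... ⊔ V_p, and let c be a strong edge coloring of rank p (i.e., some minimal c-image has cardinality p). Then there exists a color word γ of length divisible by p and distinguished vertices v_i ∈ V_i for each i such that V_i · γ = {v_i} for all i; that is, c is p-synchronizing. -/
theorem stmt_11 {V E : Type*} [Finite V] [Finite E] (r s : E → V)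
    (htrans : ∀ v w : V, ∃ l : List E,
      List.Chain' (fun e f => s e = r f) l ∧
        l.head?.map r = some w ∧ l.getLast?.map s = some v)
    (d : ℕ) (hreg : ∀ v : V, Nat.card {e : E // r e = v} = d)
    (c : E → Fin d)
    (hstrong : ∀ e f : E, r e = r f → c e = c f → e = f)
    -- `G` is `p`-periodic with cyclic decomposition encoded by `π : V → ZMod p`
    (p : ℕ) (hp : 0 < p)
    (π : V → ZMod p) (hsurj : Function.Surjective π)
    (hedge : ∀ e : E, π (r e) = π (s e) + 1)
    (hmax : ∀ q : ℕ, 0 < q →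
      (∃ π' : V → ZMod q, Function.Surjective π' ∧ ∀ e : E, π' (r e) = π' (s e) + 1) → q ≤ p)
    -- `act v γ` is the source of the unique backtracked path with range `v` and color `γ`
    (act : V → List (Fin d) → V)
    (hact : ∀ (v : V) (l : List E), List.Chain' (fun e f => s e = r f) l →
      (∀ h : l ≠ [], r (l.head h) = v) →
      act v (l.map c) = (l.getLast?.map s).getD v)
    -- the coloring `c` has rank `p`: some minimal `c`-image has cardinality `p`
    (hrank : ∃ I : Set V, (∃ γ : List (Fin d), I = Set.range (fun v => act v γ)) ∧
      Nat.card I = p ∧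
      ∀ J : Set V, (∃ γ : List (Fin d), J = Set.range (fun v => act v γ)) →
        Nat.card I ≤ Nat.card J) :
    -- `c` is `p`-synchronizing, with a synchronizing word of length divisible by `p`
    ∃ (γ : List (Fin d)) (vsel : ZMod p → V),
      p ∣ γ.length ∧ (∀ i : ZMod p, π (vsel i) = i) ∧
      ∀ v : V, act v γ = vsel (π v) := by

  classical
  -- For each vertex and color there is an edge with that range and color
  have hedge_ex : ∀ (v : V) (a : Fin d), ∃ e : E, r e = v ∧ c e = a := by
    intro v a
    have h1 : Function.Injective (fun e : {e : E // r e = v} => c e.1) := by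
      intro e f h
      exact Subtype.ext (hstrong _ _ (e.2.trans f.2.symm) h)
    have h2 : Function.Bijective (fun e : {e : E // r e = v} => c e.1) := by
      rw [Nat.bijective_iff_injective_and_card]
      exact ⟨h1, by simp [hreg v]⟩
    obtain ⟨e, he⟩ := h2.2 a
    exact ⟨e.1, e.2, he⟩
  -- Every color word is realized by a chain from any vertex
  have hreal : ∀ (γ : List (Fin d)) (v : V), ∃ l : List E,
      List.Chain' (fun e f => s e = r f) l ∧ (∀ h : l ≠ [], r (l.head h) = v) ∧
        l.map c = γ := by
    intro γ
    induction γ with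
    | nil => exact fun v => ⟨[], by simp [List.Chain'], by simp, by simp⟩
    | cons a γ ih =>
      intro v
      obtain ⟨e, hre, hce⟩ := hedge_ex v a
      obtain ⟨l, hl, hlh, hlc⟩ := ih (s e)
      refine ⟨e :: l, ?_, fun _ => hre, by simp [hce, hlc]⟩
      cases l with
      | nil => simp [List.Chain']
      | cons f l' => exact List.isChain_cons_cons.mpr ⟨(hlh (by simp)).symm, hl⟩
  have hnil : ∀ v : V, act v [] = v := by
    intro v
    simpa using hact v [] (by simp [List.Chain']) (by simp)
  -- act composes over concatenation
  have hcomp : ∀ (v : V) (γ δ : List (Fin d)), act v (γ ++ δ) = act (act v γ) δ := by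
    intro v γ δ
    obtain ⟨l₁, h₁c, h₁h, h₁m⟩ := hreal γ v
    have hw : act v γ = (l₁.getLast?.map s).getD v := by
      rw [← h₁m]; exact hact v l₁ h₁c h₁h
    obtain ⟨l₂, h₂c, h₂h, h₂m⟩ := hreal δ (act v γ)
    have hchain : List.Chain' (fun e f => s e = r f) (l₁ ++ l₂) := by
      apply h₁c.append h₂c
      intro x hx y hy
      have hx' : l₁.getLast? = some x := hx
      have hne₂ : l₂ ≠ [] := by intro h; rw [h] at hy; simp at hy
      have hy' : l₂.head hne₂ = y := by
        have := List.head?_eq_head hne₂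
        rw [hy] at this; exact (Option.some_inj.mp this).symm
      have := h₂h hne₂
      rw [hy'] at this
      rw [this, hw, hx']
      simp
    have hhead : ∀ h : (l₁ ++ l₂) ≠ [], r ((l₁ ++ l₂).head h) = v := by
      intro h
      cases l₁ with
      | nil =>
        simp only [List.nil_append] at h ⊢
        have hγ : γ = [] := by simpa using h₁m.symm
        have := h₂h h
        rw [this, hγ, hnil]
      | cons e l' =>
        simp only [List.cons_append, List.head_cons]
        simpa using h₁h (by simp)
    have key := hact v (l₁ ++ l₂) hchain hhead
    rw [List.map_append, h₁m, h₂m] at key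
    rw [key]
    have hδ : act (act v γ) δ = (l₂.getLast?.map s).getD (act v γ) := by
      rw [← h₂m]; exact hact (act v γ) l₂ h₂c h₂h
    cases l₂ with
    | nil =>
      simp only [List.append_nil]
      rw [hδ, ← hw]; simp
    | cons f l' =>
      rw [hδ, List.getLast?_append_of_ne_nil _ (by simp)]
      obtain ⟨x, hx⟩ : ∃ x, (f :: l').getLast? = some x := ⟨_, List.getLast?_eq_getLast (by simp)⟩
      rw [hx]; simp
  -- act on a single letter
  have hsingle : ∀ (v : V) (a : Fin d), π (act v [a]) = π v - 1 := by
    intro v a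
    obtain ⟨e, hre, hce⟩ := hedge_ex v a
    have : act v [c e] = s e := by
      have := hact v [e] (by simp [List.Chain']) (fun _ => hre)
      simpa using this
    rw [hce] at this
    rw [this]
    have := hedge e
    rw [hre] at this
    rw [this]; ring
  -- π of act
  have hπact : ∀ (γ : List (Fin d)) (v : V), π (act v γ) = π v - γ.length := by
    intro γ
    induction γ with
    | nil => intro v; simp [hnil]
    | cons a γ ih =>
      intro v
      have : (a :: γ) = [a] ++ γ := rfl
      rw [this, hcomp, ih, hsingle]
      simp only [List.length_append, List.length_cons, List.length_nil]
      push_cast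
      ring
  -- image cardinality is monotone under extension
  have himage : ∀ γ δ : List (Fin d),
      Nat.card (Set.range (fun v => act v (γ ++ δ)) : Set V) ≤
        Nat.card (Set.range (fun v => act v γ) : Set V) := by
    intro γ δ
    have : (Set.range (fun v => act v (γ ++ δ)) : Set V) =
        (fun w => act w δ) '' Set.range (fun v => act v γ) := by
      rw [← Set.range_comp]
      ext x
      simp only [Set.mem_range, Function.comp]
      constructor
      · rintro ⟨v, rfl⟩; exact ⟨v, (hcomp v γ δ).symm⟩
      · rintro ⟨v, rfl⟩; exact ⟨v, hcomp v γ δ⟩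
    rw [this]
    exact Nat.card_image_le (Set.range _).toFinite
  -- main argument
  obtain ⟨I, ⟨γ₀, hIdef⟩, hIcard, hImin⟩ := hrank
  obtain ⟨k, rfl⟩ : ∃ k, p = k + 1 := ⟨p - 1, by omega⟩
  set γ : List (Fin d) := γ₀ ++ (List.replicate k γ₀).flatten with hγdef
  have hlen : γ.length = (k + 1) * γ₀.length := by
    simp only [hγdef, List.length_append, List.length_flatten, List.map_replicate,
      List.sum_replicate, smul_eq_mul]
    ring
  have hdvd : (k + 1) ∣ γ.length := ⟨γ₀.length, hlen⟩
  have hcast : ((γ.length : ℕ) : ZMod (k + 1)) = 0 :=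
    (ZMod.natCast_eq_zero_iff _ _).mpr hdvd
  set J : Set V := Set.range (fun v => act v γ) with hJdef
  have hJle : Nat.card J ≤ (k + 1) := by
    rw [← hIcard, hIdef]; exact himage γ₀ _
  have hJge : (k + 1) ≤ Nat.card J := hIcard ▸ hImin J ⟨γ, rfl⟩
  have hJcard : Nat.card J = (k + 1) := le_antisymm hJle hJge
  -- π restricted to J is bijective
  have hsurjJ : Function.Surjective (fun x : J => π x.1) := by
    intro j
    obtain ⟨v, hv⟩ := hsurj (j + γ.length)
    refine ⟨⟨act v γ, ⟨v, rfl⟩⟩, ?_⟩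
    simp only
    rw [hπact, hv]; ring
  have hbijJ : Function.Bijective (fun x : J => π x.1) := by
    rw [Nat.bijective_iff_surjective_and_card]
    exact ⟨hsurjJ, by rw [hJcard, Nat.card_zmod]⟩
  -- the selector
  set g : ZMod (k + 1) → V := Function.surjInv hsurj with hgdef
  have hg : ∀ i, π (g i) = i := Function.surjInv_eq hsurj
  refine ⟨γ, fun i => act (g i) γ, hdvd, ?_, ?_⟩
  · intro i
    rw [hπact, hg, hcast, sub_zero]
  · intro v
    have h1 : (⟨act v γ, ⟨v, rfl⟩⟩ : J) = (⟨act (g (π v)) γ, ⟨g (π v), rfl⟩⟩ : J) := by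
      apply hbijJ.1
      simp only
      rw [hπact, hπact, hg]
    exact Subtype.ext_iff.mp h1
end

section
/- Let G be a finite, transitive, in-degree d-regular, p-periodic graph with cyclic decomposition V = V₁ ⊔ ... ⊔ V_p equipped with a strong edge coloring c of rank p. If γ is a p-synchronizing word for a tuple (v₁,...,v_p) with v_i ∈ V_i, and w₁ ∈ V₁ is any vertex, then there exist vertices w_j ∈ V_j for j ≥ 2 and a p-synchronizing word μ for (w₁,...,w_p). -/
theorem stmt_12 {V E : Type*} [Finite V] [Finite E] (r s : E → V)
    (htrans : ∀ v w : V, ∃ l : List E,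
      List.Chain' (fun e f => s e = r f) l ∧
        l.head?.map r = some w ∧ l.getLast?.map s = some v)
    (d : ℕ) (hreg : ∀ v : V, Nat.card {e : E // r e = v} = d)
    (c : E → Fin d)
    (hstrong : ∀ e f : E, r e = r f → c e = c f → e = f)
    -- `G` is `p`-periodic with cyclic decomposition encoded by `π : V → ZMod p`
    (p : ℕ) (hp : 0 < p)
    (π : V → ZMod p) (hsurj : Function.Surjective π)
    (hedge : ∀ e : E, π (r e) = π (s e) + 1)
    (hmax : ∀ q : ℕ, 0 < q →
      (∃ π' : V → ZMod q, Function.Surjective π' ∧ ∀ e : E, π' (r e) = π' (s e) + 1) → q ≤ p)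
    -- `act v γ` is the source of the unique backtracked path with range `v` and color `γ`
    (act : V → List (Fin d) → V)
    (hact : ∀ (v : V) (l : List E), List.Chain' (fun e f => s e = r f) l →
      (∀ h : l ≠ [], r (l.head h) = v) →
      act v (l.map c) = (l.getLast?.map s).getD v)
    -- the coloring `c` has rank `p`: every `c`-image has cardinality at least `p`
    (hrank : ∀ J : Set V, (∃ γ : List (Fin d), J = Set.range (fun v => act v γ)) →
      p ≤ Nat.card J)
    -- `γ` is a `p`-synchronizing word for the tuple `(v₁, ..., v_p) = vsel`
    (γ : List (Fin d)) (vsel : ZMod p → V)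
    (hvsel : ∀ i : ZMod p, π (vsel i) = i)
    (hsync : ∀ v : V, act v γ = vsel (π v))
    -- an arbitrary vertex `w₁` in one of the cyclic components
    (w : V) :
    ∃ (wsel : ZMod p → V) (μ : List (Fin d)),
      (∀ i : ZMod p, π (wsel i) = i) ∧ wsel (π w) = w ∧
      ∀ v : V, act v μ = wsel (π v) := by
  classical
  -- Step 1: every color has a unique incoming edge at every vertex
  have hedgeex : ∀ (v : V) (a : Fin d), ∃ e : E, r e = v ∧ c e = a := by
    intro v a
    have hinj : Function.Injective (fun e : {e : E // r e = v} => c e.1) := by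
      rintro ⟨e, he⟩ ⟨f, hf⟩ h
      exact Subtype.ext (hstrong e f (he.trans hf.symm) h)
    have hcard : Nat.card {e : E // r e = v} = Nat.card (Fin d) := by
      simp [hreg v]
    have hbij : Function.Bijective (fun e : {e : E // r e = v} => c e.1) :=
      (Nat.bijective_iff_injective_and_card _).2 ⟨hinj, hcard⟩
    obtain ⟨⟨e, he⟩, hce⟩ := hbij.2 a
    exact ⟨e, he, hce⟩
  -- Step 2: every word is realized by a path from every vertex
  have hB : ∀ (γ' : List (Fin d)) (v : V), ∃ l : List E,
      List.Chain' (fun e f => s e = r f) l ∧ l.map c = γ' ∧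
      (∀ h : l ≠ [], r (l.head h) = v) ∧
      act v γ' = (l.getLast?.map s).getD v ∧
      π ((l.getLast?.map s).getD v) = π v - γ'.length := by
    intro γ'
    induction γ' with
    | nil =>
      intro v
      refine ⟨[], List.isChain_nil, rfl, by simp, ?_, by simp⟩
      have := hact v [] List.isChain_nil (by simp)
      simpa using this
    | cons a rest ih =>
      intro v
      obtain ⟨e, her, hec⟩ := hedgeex v a
      obtain ⟨l', hl'chain, hl'map, hl'head, hl'act, hl'pi⟩ := ih (s e)
      have hdest : ((e :: l').getLast?.map s).getD v = (l'.getLast?.map s).getD (s e) := by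
        cases l' with
        | nil => simp
        | cons f t =>
          rw [List.getLast?_cons_cons]
          rcases (f :: t).getLast?.eq_none_or_eq_some with h | ⟨x, h⟩
          · simp at h
          · simp [h]
      have hchain : List.Chain' (fun e f => s e = r f) (e :: l') := by
        apply List.isChain_cons.2
        refine ⟨?_, hl'chain⟩
        intro b hb
        cases l' with
        | nil => simp at hb
        | cons f t =>
          simp at hb
          subst hb
          exact (hl'head (by simp)).symm
      have hhead : ∀ h : (e :: l') ≠ [], r ((e :: l').head h) = v := by
        intro h; simpa using her
      have hmap : (e :: l').map c = a :: rest := by simp [hec, hl'map]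
      have hacteq : act v (a :: rest) = ((e :: l').getLast?.map s).getD v := by
        rw [← hmap]; exact hact v (e :: l') hchain hhead
      refine ⟨e :: l', hchain, hmap, hhead, hacteq, ?_⟩
      rw [hdest, hl'pi]
      have hse : π (s e) = π v - 1 := by
        have := hedge e
        rw [her] at this
        rw [this]; ring
      rw [hse]
      simp only [List.length_cons]
      push_cast
      ring
  -- Step 3: composition law
  have hcomp : ∀ (γ₁ γ₂ : List (Fin d)) (v : V),
      act v (γ₁ ++ γ₂) = act (act v γ₁) γ₂ := by
    intro γ₁ γ₂ v
    obtain ⟨l₁, h1chain, h1map, h1head, h1act, -⟩ := hB γ₁ v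
    obtain ⟨l₂, h2chain, h2map, h2head, h2act, -⟩ := hB γ₂ (act v γ₁)
    have hchain : List.Chain' (fun e f => s e = r f) (l₁ ++ l₂) := by
      apply List.IsChain.append h1chain h2chain
      intro x hx y hy
      have hl₁ne : l₁ ≠ [] := by
        intro h; subst h; simp at hx
      have hl₂ne : l₂ ≠ [] := by
        intro h; subst h; simp at hy
      have hx' : x = l₁.getLast hl₁ne := by
        rw [List.getLast?_eq_getLast hl₁ne] at hx
        exact (Option.some_inj.1 hx).symm ▸ (by simpa using hx)
      have hy' : y = l₂.head hl₂ne := by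
        rw [List.head?_eq_head hl₂ne] at hy
        simpa using hy.symm
      subst hx' hy'
      rw [h2head hl₂ne, h1act, List.getLast?_eq_getLast hl₁ne]
      simp
    have hhead : ∀ h : (l₁ ++ l₂) ≠ [], r ((l₁ ++ l₂).head h) = v := by
      intro h
      cases l₁ with
      | nil =>
        simp only [List.nil_append] at h ⊢
        rw [h2head h]
        have : γ₁ = [] := by simpa using h1map.symm
        subst this
        rw [h1act]; simp
      | cons e t =>
        have := h1head (by simp)
        simpa using this
    have hmap : (l₁ ++ l₂).map c = γ₁ ++ γ₂ := by simp [h1map, h2map]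
    have := hact v (l₁ ++ l₂) hchain hhead
    rw [hmap] at this
    rw [this, h2act]
    cases l₂ with
    | nil =>
      have : γ₂ = [] := by simpa using h2map.symm
      subst this
      simp [h1act]
    | cons f t =>
      rw [List.getLast?_append_of_ne_nil _ (by simp)]
      rcases ((f :: t).getLast?).eq_none_or_eq_some with h | ⟨x, h⟩
      · simp at h
      · simp [h]
  -- Step 4: the path λ from w to vsel (π w)
  obtain ⟨l, hlchain, hlhead, hllast⟩ := htrans w (vsel (π w))
  have hlne : l ≠ [] := by
    intro h; subst h; simp at hlhead
  have hlhead' : ∀ h : l ≠ [], r (l.head h) = vsel (π w) := by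
    intro h
    rw [List.head?_eq_head h] at hlhead
    simpa using hlhead
  have hdest : (l.getLast?.map s).getD (vsel (π w)) = w := by
    rw [hllast]; rfl
  have hactl : act (vsel (π w)) (l.map c) = w := by
    rw [hact _ l hlchain hlhead', hdest]
  -- |λ| ≡ 0 mod p
  have hlen : ((l.map c).length : ZMod p) = 0 := by
    obtain ⟨l', -, -, -, h'act, h'pi⟩ := hB (l.map c) (vsel (π w))
    rw [← h'act, hactl, hvsel] at h'pi
    exact sub_eq_self.mp h'pi.symm
  -- Step 5: assemble
  refine ⟨fun i => act (vsel i) (l.map c), γ ++ l.map c, ?_, ?_, ?_⟩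
  · intro i
    obtain ⟨l', -, -, -, h'act, h'pi⟩ := hB (l.map c) (vsel i)
    rw [← h'act, hvsel, hlen] at h'pi
    simpa using h'pi
  · exact hactl
  · intro v
    rw [hcomp, hsync]
end

section
/- Let G be a finite transitive directed graph in which every vertex has in-degree at least 2, and let v be a vertex of in-degree d_v ≥ 3. Then the v-lag graph Ĝ_v is a finite transitive directed graph in which every vertex has in-degree at least 2, and Ĝ_v has exactly one fewer vertex of in-degree at least 3 than G. -/
/-- Range map of the `v`-lag `Ĝ_v`.  Vertices of `Ĝ_v` are `V ⊕ Fin (d - 2)`, where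
`Sum.inr i` is the new vertex `v_{i+1}`; edges are `E ⊕ Fin (d - 2)`, where `Sum.inr i`
is the new edge `f_{i+1} : v_{i+1} → v_i` (with `v_0 := v`) and `Sum.inl e` for an old
edge `e_j` into `v` (enumerated by `enum`) is the replacement edge `ê_j`. -/
noncomputable def lagR {V E : Type*} (r : E → V) (v : V) (d : ℕ) (hd : 3 ≤ d)
    (enum : {e : E // r e = v} ≃ Fin d) :
    E ⊕ Fin (d - 2) → V ⊕ Fin (d - 2) :=
  fun x =>
    match x with
    | Sum.inl e =>
      @dite _ (r e = v) (Classical.dec _)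
        (fun h =>
          if h0 : (enum ⟨e, h⟩).val = 0 then Sum.inl v
          else if h1 : (enum ⟨e, h⟩).val = d - 1 then Sum.inr ⟨d - 3, by omega⟩
          else Sum.inr ⟨(enum ⟨e, h⟩).val - 1, by have := (enum ⟨e, h⟩).isLt; omega⟩)
        (fun _ => Sum.inl (r e))
    | Sum.inr i =>
      if h0 : i.val = 0 then Sum.inl v
      else Sum.inr ⟨i.val - 1, by have := i.isLt; omega⟩

/-- Source map of the `v`-lag `Ĝ_v`: old edges keep their source, and the new edge
`f_{i+1}` has source `v_{i+1}`. -/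
def lagS {V E : Type*} (s : E → V) :
    E ⊕ Fin (d - 2) → V ⊕ Fin (d - 2) :=
  fun x =>
    match x with
    | Sum.inl e => Sum.inl (s e)
    | Sum.inr i => Sum.inr i

theorem isPathFrom_singleton {V E : Type*} (r s : E → V) (e : E) :
    IsPathFrom r s [e] (s e) (r e) := ⟨List.isChain_singleton _, rfl, rfl⟩

theorem IsPathFrom.comp {V E : Type*} {r s : E → V} {p q : List E} {m t u : V}
    (hp : IsPathFrom r s p m t) (hq : IsPathFrom r s q u m) :
    IsPathFrom r s (p ++ q) u t := by
  obtain ⟨hc1, hh1, hl1⟩ := hp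
  obtain ⟨hc2, hh2, hl2⟩ := hq
  obtain ⟨x, hx, hxm⟩ := Option.map_eq_some_iff.mp hl1
  obtain ⟨y, hy, hym⟩ := Option.map_eq_some_iff.mp hh2
  have hpne : p ≠ [] := by rintro rfl; simp at hx
  have hqne : q ≠ [] := by rintro rfl; simp at hy
  refine ⟨List.isChain_append.mpr ⟨hc1, hc2, ?_⟩, ?_, ?_⟩
  · intro a ha b hb
    rw [ha] at hx; rw [hb] at hy
    cases hx; cases hy; rw [hxm, hym]
  · rw [List.head?_append_of_ne_nil _ hpne]; exact hh1
  · rw [List.getLast?_append_of_ne_nil _ hqne]; exact hl2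

section
variable {V E : Type*} (r s : E → V) (v : V) (d : ℕ) (hd : 3 ≤ d)
    (enum : {e : E // r e = v} ≃ Fin d)

theorem lagR_inl_ne (e : E) (h : ¬ r e = v) :
    lagR r v d hd enum (Sum.inl e) = Sum.inl (r e) := by
  simp only [lagR]; rw [dif_neg h]

theorem lagR_inl_zero (e : E) (h : r e = v) (h0 : (enum ⟨e, h⟩).val = 0) :
    lagR r v d hd enum (Sum.inl e) = Sum.inl v := by
  simp only [lagR]; rw [dif_pos h, dif_pos h0]

theorem lagR_inl_last (e : E) (h : r e = v) (h0 : (enum ⟨e, h⟩).val ≠ 0)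
    (h1 : (enum ⟨e, h⟩).val = d - 1) :
    lagR r v d hd enum (Sum.inl e) = Sum.inr ⟨d - 3, by omega⟩ := by
  simp only [lagR]; rw [dif_pos h, dif_neg h0, dif_pos h1]

theorem lagR_inl_mid (e : E) (h : r e = v) (h0 : (enum ⟨e, h⟩).val ≠ 0)
    (h1 : (enum ⟨e, h⟩).val ≠ d - 1) :
    lagR r v d hd enum (Sum.inl e) =
      Sum.inr ⟨(enum ⟨e, h⟩).val - 1, by have := (enum ⟨e, h⟩).isLt; omega⟩ := by
  simp only [lagR]; rw [dif_pos h, dif_neg h0, dif_neg h1]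

theorem lagR_inr_zero (i : Fin (d - 2)) (h0 : i.val = 0) :
    lagR r v d hd enum (Sum.inr i) = Sum.inl v := by
  simp only [lagR]; rw [dif_pos h0]

theorem lagR_inr_pos (i : Fin (d - 2)) (h0 : i.val ≠ 0) :
    lagR r v d hd enum (Sum.inr i) = Sum.inr ⟨i.val - 1, by have := i.isLt; omega⟩ := by
  simp only [lagR]; rw [dif_neg h0]

/-- Path from the new vertex `v_{k+1}` (index `k`) down to `v`. -/
theorem np_path (k : ℕ) (hk : k < d - 2) :
    ∃ l, IsPathFrom (lagR r v d hd enum) (lagS s) l (Sum.inr ⟨k, hk⟩) (Sum.inl v) := by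
  induction k with
  | zero =>
    refine ⟨[Sum.inr ⟨0, hk⟩], ?_⟩
    have := isPathFrom_singleton (lagR r v d hd enum) (lagS s) (Sum.inr ⟨0, hk⟩)
    rwa [lagR_inr_zero r v d hd enum _ rfl] at this
  | succ k ih =>
    obtain ⟨l, hl⟩ := ih (by omega)
    refine ⟨l ++ [Sum.inr ⟨k + 1, hk⟩], hl.comp ?_⟩
    have := isPathFrom_singleton (lagR r v d hd enum) (lagS s) (Sum.inr ⟨k + 1, hk⟩)
    rwa [lagR_inr_pos r v d hd enum _ (by simp), show (⟨k + 1 - 1, by omega⟩ : Fin (d-2)) = ⟨k, by omega⟩ by simp] at this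

/-- Lift of a single edge. -/
theorem liftEdge (e : E) :
    ∃ l, IsPathFrom (lagR r v d hd enum) (lagS s) l (Sum.inl (s e)) (Sum.inl (r e)) := by
  by_cases h : r e = v
  · by_cases h0 : (enum ⟨e, h⟩).val = 0
    · refine ⟨[Sum.inl e], ?_⟩
      have := isPathFrom_singleton (lagR r v d hd enum) (lagS s) (Sum.inl e)
      rw [lagR_inl_zero r v d hd enum e h h0] at this
      rw [h]; exact this
    · by_cases h1 : (enum ⟨e, h⟩).val = d - 1
      · obtain ⟨q, hq⟩ := np_path r s v d hd enum (d - 3) (by omega)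
        refine ⟨q ++ [Sum.inl e], ?_⟩
        rw [h]
        refine hq.comp ?_
        have := isPathFrom_singleton (lagR r v d hd enum) (lagS s) (Sum.inl e)
        rwa [lagR_inl_last r v d hd enum e h h0 h1] at this
      · have hlt := (enum ⟨e, h⟩).isLt
        obtain ⟨q, hq⟩ := np_path r s v d hd enum ((enum ⟨e, h⟩).val - 1) (by omega)
        refine ⟨q ++ [Sum.inl e], ?_⟩
        rw [h]
        refine hq.comp ?_
        have := isPathFrom_singleton (lagR r v d hd enum) (lagS s) (Sum.inl e)
        rwa [lagR_inl_mid r v d hd enum e h h0 h1] at this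
  · refine ⟨[Sum.inl e], ?_⟩
    have := isPathFrom_singleton (lagR r v d hd enum) (lagS s) (Sum.inl e)
    rwa [lagR_inl_ne r v d hd enum e h] at this

/-- Lift of a path in `G`. -/
theorem liftPath : ∀ (l : List E) (a b : V), IsPathFrom r s l a b →
    ∃ l', IsPathFrom (lagR r v d hd enum) (lagS s) l' (Sum.inl a) (Sum.inl b) := by
  intro l
  induction l with
  | nil => intro a b h; simp [IsPathFrom] at h
  | cons e rest ih =>
    intro a b h
    obtain ⟨hc, hh, hl⟩ := h
    simp only [List.head?_cons, Option.map_some] at hh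
    obtain rfl : b = r e := (Option.some.inj hh).symm
    match rest, hc, hl with
    | [], _, hl =>
      obtain rfl : a = s e := by
        simp only [List.getLast?_singleton, Option.map_some] at hl
        exact (Option.some.inj hl).symm
      exact liftEdge r s v d hd enum e
    | f :: rest', hc, hl =>
      have hsr : s e = r f := (List.isChain_cons_cons.mp hc).1
      have hrest : IsPathFrom r s (f :: rest') a (r f) := by
        refine ⟨(List.isChain_cons_cons.mp hc).2, by simp, ?_⟩
        simpa using hl
      obtain ⟨l', hl'⟩ := ih a (r f) hrest
      obtain ⟨le, hle⟩ := liftEdge r s v d hd enum e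
      rw [← hsr] at hl'
      exact ⟨le ++ l', hle.comp hl'⟩

theorem lag_entry (j : Fin (d - 2)) :
    ∃ e : E, IsPathFrom (lagR r v d hd enum) (lagS s) [Sum.inl e]
      (Sum.inl (s e)) (Sum.inr j) := by
  have hjlt : j.val + 1 < d := by have := j.isLt; omega
  set x := enum.symm ⟨j.val + 1, hjlt⟩ with hx
  refine ⟨x.val, ?_⟩
  have he : r x.val = v := x.prop
  have hidx : enum ⟨x.val, he⟩ = ⟨j.val + 1, hjlt⟩ := by
    rw [show (⟨x.val, he⟩ : {e // r e = v}) = x from Subtype.ext rfl, hx]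
    exact enum.apply_symm_apply _
  have h0 : (enum ⟨x.val, he⟩).val ≠ 0 := by rw [hidx]; simp
  have h1 : (enum ⟨x.val, he⟩).val ≠ d - 1 := by rw [hidx]; have := j.isLt; simp; omega
  have hR : lagR r v d hd enum (Sum.inl x.val) = Sum.inr j := by
    rw [lagR_inl_mid r v d hd enum x.val he h0 h1]
    congr 1
    apply Fin.ext
    simp [hidx]
  have := isPathFrom_singleton (lagR r v d hd enum) (lagS s) (Sum.inl x.val)
  rwa [hR] at this

theorem lag_trans (htrans : ∀ v w : V, ∃ l : List E, IsPathFrom r s l v w) :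
    ∀ a b : V ⊕ Fin (d - 2), ∃ l, IsPathFrom (lagR r v d hd enum) (lagS s) l a b := by
  have exit : ∀ i : Fin (d - 2),
      ∃ l, IsPathFrom (lagR r v d hd enum) (lagS s) l (Sum.inr i) (Sum.inl v) :=
    fun i => np_path r s v d hd enum i.val i.isLt
  rintro (x | i) (y | j)
  · obtain ⟨l, hl⟩ := htrans x y
    exact liftPath r s v d hd enum l x y hl
  · obtain ⟨e, hpe⟩ := lag_entry r s v d hd enum j
    obtain ⟨l, hl⟩ := htrans x (s e)
    obtain ⟨l', hl'⟩ := liftPath r s v d hd enum l x (s e) hl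
    exact ⟨_, hpe.comp hl'⟩
  · obtain ⟨l, hl⟩ := htrans v y
    obtain ⟨l', hl'⟩ := liftPath r s v d hd enum l v y hl
    obtain ⟨pa, hpa⟩ := exit i
    exact ⟨_, hl'.comp hpa⟩
  · obtain ⟨e, hpe⟩ := lag_entry r s v d hd enum j
    obtain ⟨l, hl⟩ := htrans v (s e)
    obtain ⟨l', hl'⟩ := liftPath r s v d hd enum l v (s e) hl
    obtain ⟨pa, hpa⟩ := exit i
    exact ⟨_, hpe.comp (hl'.comp hpa)⟩

theorem enum_symm_val (y : Fin d) :
    enum ⟨(enum.symm y).val, (enum.symm y).prop⟩ = y := by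
  rw [show (⟨(enum.symm y).val, (enum.symm y).prop⟩ : {e // r e = v}) = enum.symm y from
    Subtype.ext rfl]
  exact enum.apply_symm_apply y

theorem eq_symm_val (e : E) (h : r e = v) (y : Fin d) (hy : enum ⟨e, h⟩ = y) :
    e = (enum.symm y).val := by
  have : (⟨e, h⟩ : {e // r e = v}) = enum.symm y := by rw [← hy, Equiv.symm_apply_apply]
  exact congrArg Subtype.val this

theorem lagR_symm_mid (j : Fin (d - 2)) (hj1 : j.val + 1 < d) :
    lagR r v d hd enum (Sum.inl (enum.symm ⟨j.val + 1, hj1⟩).val) = Sum.inr j := by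
  have he := (enum.symm ⟨j.val + 1, hj1⟩).prop
  have hidx := enum_symm_val r v d enum ⟨j.val + 1, hj1⟩
  have h0 : (enum ⟨(enum.symm ⟨j.val + 1, hj1⟩).val, he⟩).val ≠ 0 := by rw [hidx]; simp
  have h1 : (enum ⟨(enum.symm ⟨j.val + 1, hj1⟩).val, he⟩).val ≠ d - 1 := by
    rw [hidx]; have := j.isLt; simp; omega
  rw [lagR_inl_mid r v d hd enum _ he h0 h1]
  congr 1
  apply Fin.ext
  simp [hidx]

theorem lagR_symm_last (hd1 : d - 1 < d) (j : Fin (d - 2)) (hj : j.val = d - 3) :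
    lagR r v d hd enum (Sum.inl (enum.symm ⟨d - 1, hd1⟩).val) = Sum.inr j := by
  have he := (enum.symm ⟨d - 1, hd1⟩).prop
  have hidx := enum_symm_val r v d enum ⟨d - 1, hd1⟩
  have h0 : (enum ⟨(enum.symm ⟨d - 1, hd1⟩).val, he⟩).val ≠ 0 := by rw [hidx]; simp; omega
  have h1 : (enum ⟨(enum.symm ⟨d - 1, hd1⟩).val, he⟩).val = d - 1 := by rw [hidx]
  rw [lagR_inl_last r v d hd enum _ he h0 h1]
  congr 1
  exact (Fin.ext hj.symm)

theorem lagR_symm_zero (h0d : 0 < d) :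
    lagR r v d hd enum (Sum.inl (enum.symm ⟨0, h0d⟩).val) = Sum.inl v := by
  have he := (enum.symm ⟨0, h0d⟩).prop
  have hidx := enum_symm_val r v d enum ⟨0, h0d⟩
  exact lagR_inl_zero r v d hd enum _ he (by rw [hidx])

theorem fib_v_sub (h0d : 0 < d) (h02 : 0 < d - 2) :
    ∀ x, lagR r v d hd enum x = Sum.inl v →
      x = Sum.inl (enum.symm ⟨0, h0d⟩).val ∨ x = Sum.inr ⟨0, h02⟩ := by
  rintro (e | i) hx
  · left
    by_cases h : r e = v
    · by_cases h0 : (enum ⟨e, h⟩).val = 0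
      · congr 1
        exact eq_symm_val r v d enum e h ⟨0, h0d⟩ (Fin.ext h0)
      · by_cases h1 : (enum ⟨e, h⟩).val = d - 1
        · rw [lagR_inl_last r v d hd enum e h h0 h1] at hx; simp at hx
        · rw [lagR_inl_mid r v d hd enum e h h0 h1] at hx; simp at hx
    · rw [lagR_inl_ne r v d hd enum e h] at hx
      exact absurd (Sum.inl.inj hx) h
  · right
    by_cases h0 : i.val = 0
    · congr 1; exact Fin.ext h0
    · rw [lagR_inr_pos r v d hd enum i h0] at hx; simp at hx

theorem fib_j_sub (j : Fin (d - 2)) (hj1 : j.val + 1 < d) (hd1 : d - 1 < d) :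
    ∀ x, lagR r v d hd enum x = Sum.inr j →
      x = Sum.inl (enum.symm ⟨j.val + 1, hj1⟩).val ∨
      x = (if h : j.val + 1 < d - 2 then Sum.inr ⟨j.val + 1, h⟩
           else Sum.inl (enum.symm ⟨d - 1, hd1⟩).val) := by
  rintro (e | i) hx
  · by_cases h : r e = v
    · by_cases h0 : (enum ⟨e, h⟩).val = 0
      · rw [lagR_inl_zero r v d hd enum e h h0] at hx; simp at hx
      · by_cases h1 : (enum ⟨e, h⟩).val = d - 1
        · right
          rw [lagR_inl_last r v d hd enum e h h0 h1] at hx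
          have hj : j.val = d - 3 := by
            have := Sum.inr.inj hx
            have := congrArg Fin.val this
            simpa using this.symm
          rw [dif_neg (by omega)]
          congr 1
          exact eq_symm_val r v d enum e h ⟨d - 1, hd1⟩ (Fin.ext h1)
        · left
          rw [lagR_inl_mid r v d hd enum e h h0 h1] at hx
          have hj : (enum ⟨e, h⟩).val - 1 = j.val := by
            have := congrArg Fin.val (Sum.inr.inj hx)
            simpa using this
          congr 1
          exact eq_symm_val r v d enum e h ⟨j.val + 1, hj1⟩ (Fin.ext (by simp; omega))
    · rw [lagR_inl_ne r v d hd enum e h] at hx; simp at hx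
  · right
    by_cases h0 : i.val = 0
    · rw [lagR_inr_zero r v d hd enum i h0] at hx; simp at hx
    · rw [lagR_inr_pos r v d hd enum i h0] at hx
      have hj : i.val - 1 = j.val := by
        have := congrArg Fin.val (Sum.inr.inj hx)
        simpa using this
      have hlt : j.val + 1 < d - 2 := by have := i.isLt; omega
      rw [dif_pos hlt]
      congr 1
      exact Fin.ext (by simp; omega)

theorem fib_j_mem2 (j : Fin (d - 2)) (hd1 : d - 1 < d) :
    lagR r v d hd enum
      (if h : j.val + 1 < d - 2 then Sum.inr ⟨j.val + 1, h⟩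
       else Sum.inl (enum.symm ⟨d - 1, hd1⟩).val) = Sum.inr j := by
  by_cases h : j.val + 1 < d - 2
  · rw [dif_pos h, lagR_inr_pos r v d hd enum _ (by simp)]
    congr 1
  · rw [dif_neg h]
    exact lagR_symm_last r v d hd enum hd1 j (by have := j.isLt; omega)
end

theorem two_le_card {α : Type*} [Finite α] {a b : α} (h : a ≠ b) : 2 ≤ Nat.card α :=
  Finite.one_lt_card_iff_nontrivial.mpr ⟨a, b, h⟩

theorem card_le_two {α : Type*} {p : α → Prop} {a b : α}
    (h : ∀ x, p x → x = a ∨ x = b) : Nat.card {x // p x} ≤ 2 := by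
  classical
  have hinj : Function.Injective (fun x : {x // p x} => decide (x.val = a)) := by
    rintro ⟨x, hx⟩ ⟨y, hy⟩ hxy
    simp only [decide_eq_decide] at hxy
    apply Subtype.ext
    show x = y
    by_cases hxa : x = a
    · exact hxa.trans (hxy.mp hxa).symm
    · have hxb : x = b := (h x hx).resolve_left hxa
      have hya : y ≠ a := fun hya => hxa (hxy.mpr hya)
      have hyb : y = b := (h y hy).resolve_left hya
      exact hxb.trans hyb.symm
  calc Nat.card {x // p x} ≤ Nat.card Bool := Nat.card_le_card_of_injective _ hinj
    _ = 2 := by simp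

section
variable {V E : Type*} [Finite V] [Finite E] (r s : E → V) (v : V) (d : ℕ) (hd : 3 ≤ d)
    (enum : {e : E // r e = v} ≃ Fin d)

theorem lag_card_eq (u : V) (hu : u ≠ v) :
    Nat.card {x : E ⊕ Fin (d - 2) // lagR r v d hd enum x = Sum.inl u} =
      Nat.card {e : E // r e = u} := by
  have hset : {x : E ⊕ Fin (d - 2) | lagR r v d hd enum x = Sum.inl u} =
      Sum.inl '' {e : E | r e = u} := by
    ext x
    rcases x with e | i
    · simp only [Set.mem_setOf_eq, Set.mem_image]
      constructor
      · intro hx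
        by_cases h : r e = v
        · exfalso
          by_cases h0 : (enum ⟨e, h⟩).val = 0
          · rw [lagR_inl_zero r v d hd enum e h h0] at hx
            exact hu (Sum.inl.inj hx).symm
          · by_cases h1 : (enum ⟨e, h⟩).val = d - 1
            · rw [lagR_inl_last r v d hd enum e h h0 h1] at hx; simp at hx
            · rw [lagR_inl_mid r v d hd enum e h h0 h1] at hx; simp at hx
        · rw [lagR_inl_ne r v d hd enum e h] at hx
          exact ⟨e, Sum.inl.inj hx, rfl⟩
      · rintro ⟨e', he', heq⟩
        obtain rfl := Sum.inl.inj heq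
        rw [lagR_inl_ne r v d hd enum _ (by rw [he']; exact hu), he']
    · simp only [Set.mem_setOf_eq, Set.mem_image]
      constructor
      · intro hx
        by_cases h0 : i.val = 0
        · rw [lagR_inr_zero r v d hd enum i h0] at hx
          exact absurd (Sum.inl.inj hx).symm hu
        · rw [lagR_inr_pos r v d hd enum i h0] at hx; simp at hx
      · rintro ⟨e', _, heq⟩; simp at heq
  calc Nat.card {x : E ⊕ Fin (d - 2) // lagR r v d hd enum x = Sum.inl u}
      = (Sum.inl '' {e : E | r e = u} : Set (E ⊕ Fin (d - 2))).ncard := by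
        rw [← hset]; exact Nat.card_coe_set_eq _
    _ = ({e : E | r e = u}).ncard := Set.ncard_image_of_injective _ Sum.inl_injective
    _ = Nat.card {e : E // r e = u} := (Nat.card_coe_set_eq _).symm
end

theorem stmt_13 {V E : Type*} [Finite V] [Finite E] (r s : E → V)
    (htrans : ∀ v w : V, ∃ l : List E, IsPathFrom r s l v w)
    (hdeg2 : ∀ w : V, 2 ≤ Nat.card {e : E // r e = w})
    (v : V) (d : ℕ) (hd : 3 ≤ d)
    (hdv : Nat.card {e : E // r e = v} = d)
    (enum : {e : E // r e = v} ≃ Fin d) :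
    (∀ a b : V ⊕ Fin (d - 2), ∃ l : List (E ⊕ Fin (d - 2)),
        IsPathFrom (lagR r v d hd enum) (lagS s) l a b) ∧
    (∀ w : V ⊕ Fin (d - 2),
        2 ≤ Nat.card {x : E ⊕ Fin (d - 2) // lagR r v d hd enum x = w}) ∧
    Nat.card {w : V ⊕ Fin (d - 2) //
        3 ≤ Nat.card {x : E ⊕ Fin (d - 2) // lagR r v d hd enum x = w}} + 1 =
      Nat.card {w : V // 3 ≤ Nat.card {e : E // r e = w}} := by
  refine ⟨lag_trans r s v d hd enum htrans, ?_, ?_⟩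
  · rintro (u | j)
    · by_cases hu : u = v
      · rw [hu]
        refine two_le_card (a := ⟨Sum.inl (enum.symm ⟨0, by omega⟩).val,
            lagR_symm_zero r v d hd enum (by omega)⟩)
          (b := ⟨Sum.inr ⟨0, by omega⟩, lagR_inr_zero r v d hd enum _ rfl⟩) ?_
        simp [Subtype.ext_iff]
      · have h2 := hdeg2 u
        have hnt : Nontrivial {e : E // r e = u} := Finite.one_lt_card_iff_nontrivial.mp h2
        obtain ⟨⟨e1, he1⟩, ⟨e2, he2⟩, hne⟩ := hnt
        refine two_le_card
          (a := ⟨Sum.inl e1, by rw [lagR_inl_ne r v d hd enum e1 (by rw [he1]; exact hu), he1]⟩)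
          (b := ⟨Sum.inl e2, by rw [lagR_inl_ne r v d hd enum e2 (by rw [he2]; exact hu), he2]⟩) ?_
        simp only [ne_eq, Subtype.mk.injEq, Sum.inl.injEq]
        intro h
        exact hne (Subtype.ext h)
    · have hj1 : j.val + 1 < d := by have := j.isLt; omega
      have hd1 : d - 1 < d := by omega
      refine two_le_card
        (a := ⟨Sum.inl (enum.symm ⟨j.val + 1, hj1⟩).val, lagR_symm_mid r v d hd enum j hj1⟩)
        (b := ⟨_, fib_j_mem2 r v d hd enum j hd1⟩) ?_
      by_cases h : j.val + 1 < d - 2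
      · simp [Subtype.ext_iff, dif_pos h]
      · simp only [ne_eq, Subtype.mk.injEq, dif_neg h, Sum.inl.injEq]
        intro heq
        have : enum.symm ⟨j.val + 1, hj1⟩ = enum.symm ⟨d - 1, hd1⟩ := Subtype.ext heq
        have := enum.symm.injective this
        have := congrArg Fin.val this
        have hjlt := j.isLt
        simp at this
        omega
  · have hvA : (3 : ℕ) ≤ Nat.card {e : E // r e = v} := by rw [hdv]; exact hd
    have hB : {w' : V ⊕ Fin (d - 2) |
          3 ≤ Nat.card {x : E ⊕ Fin (d - 2) // lagR r v d hd enum x = w'}} =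
        Sum.inl '' ({w : V | 3 ≤ Nat.card {e : E // r e = w}} \ {v}) := by
      ext w'
      rcases w' with u | j
      · simp only [Set.mem_setOf_eq, Set.mem_image, Set.mem_diff, Set.mem_singleton_iff,
          Sum.inl.injEq]
        constructor
        · intro h3
          by_cases hu : u = v
          · exfalso
            rw [hu] at h3
            have hle := card_le_two (fib_v_sub r v d hd enum (by omega) (by omega))
            omega
          · exact ⟨u, ⟨by rwa [← lag_card_eq r v d hd enum u hu], hu⟩, rfl⟩
        · rintro ⟨u', ⟨hu'A, hu'v⟩, rfl⟩
          rwa [lag_card_eq r v d hd enum u' hu'v]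
      · simp only [Set.mem_setOf_eq, Set.mem_image, Set.mem_diff, Set.mem_singleton_iff]
        constructor
        · intro h3
          exfalso
          have hle := card_le_two
            (fib_j_sub r v d hd enum j (by have := j.isLt; omega) (by omega))
          omega
        · rintro ⟨u, _, h⟩
          simp at h
    calc Nat.card {w' : V ⊕ Fin (d - 2) //
            3 ≤ Nat.card {x : E ⊕ Fin (d - 2) // lagR r v d hd enum x = w'}} + 1
        = Nat.card ↥{w' : V ⊕ Fin (d - 2) |
            3 ≤ Nat.card {x : E ⊕ Fin (d - 2) // lagR r v d hd enum x = w'}} + 1 := rfl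
      _ = (Sum.inl '' ({w : V | 3 ≤ Nat.card {e : E // r e = w}} \ {v})).ncard + 1 := by
          rw [Nat.card_coe_set_eq, hB]
      _ = ({w : V | 3 ≤ Nat.card {e : E // r e = w}} \ {v}).ncard + 1 := by
          rw [Set.ncard_image_of_injective _ Sum.inl_injective]
      _ = ({w : V | 3 ≤ Nat.card {e : E // r e = w}}).ncard :=
          Set.ncard_diff_singleton_add_one hvA (Set.toFinite _)
      _ = Nat.card ↥{w : V | 3 ≤ Nat.card {e : E // r e = w}} :=
          (Nat.card_coe_set_eq _).symm
      _ = Nat.card {w : V // 3 ≤ Nat.card {e : E // r e = w}} := rfl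
end

section
/- Let G be a finite transitive directed graph which is not a cycle. Then repeatedly contracting edges whose range has in-degree 1 terminates in a finite transitive directed graph G̃, which is not a cycle, in which every vertex has in-degree at least 2. -/
/-- A finite directed graph with range and source maps. -/
structure FinDigraph where
  V : Type
  E : Type
  finV : Finite V
  finE : Finite E
  nonemptyV : Nonempty V
  r : E → V
  s : E → V

/-- The graph is transitive: there is a path between any two vertices. -/
def FinDigraph.Transitive (G : FinDigraph) : Prop :=
  ∀ v w : G.V, ∃ l : List G.E, IsPathFrom G.r G.s l v w

/-- The graph is an `n`-cycle for some `n > 0`. -/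
def FinDigraph.IsCycle (G : FinDigraph) : Prop :=
  ∃ n : ℕ, 0 < n ∧ ∃ (fv : ZMod n ≃ G.V) (fe : ZMod n ≃ G.E),
    ∀ i : ZMod n, G.s (fe i) = fv i ∧ G.r (fe i) = fv (i + 1)

/-- The edge contraction `G/e₀`: delete the edge `e₀` and the vertex `r e₀`, and
redirect every edge with source (resp. range) `r e₀` to have source (resp. range)
`s e₀`. -/
noncomputable def FinDigraph.contract (G : FinDigraph) (e₀ : G.E)
    (hne : G.s e₀ ≠ G.r e₀) : FinDigraph where
  V := {v : G.V // v ≠ G.r e₀}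
  E := {e : G.E // e ≠ e₀}
  finV := by have := G.finV; exact Subtype.finite
  finE := by have := G.finE; exact Subtype.finite
  nonemptyV := ⟨⟨G.s e₀, hne⟩⟩
  r := fun e => @dite _ (G.r e.1 = G.r e₀) (Classical.dec _)
    (fun _ => ⟨G.s e₀, hne⟩) (fun h => ⟨G.r e.1, h⟩)
  s := fun e => @dite _ (G.s e.1 = G.r e₀) (Classical.dec _)
    (fun _ => ⟨G.s e₀, hne⟩) (fun h => ⟨G.s e.1, h⟩)

/-- One contraction step: contract at an edge whose range has in-degree `1`. -/
def ContractStep (G G' : FinDigraph) : Prop :=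
  ∃ (e₀ : G.E) (_ : Nat.card {e : G.E // G.r e = G.r e₀} = 1)
    (hne : G.s e₀ ≠ G.r e₀), G' = G.contract e₀ hne

/-! ### Auxiliary lemmas -/

section Aux

/-- Projection of vertices of `G` to vertices of `G/e₀`. -/
noncomputable def cproj (G : FinDigraph) (e₀ : G.E) (hne : G.s e₀ ≠ G.r e₀) (v : G.V) :
    (G.contract e₀ hne).V :=
  @dite _ (v = G.r e₀) (Classical.dec _) (fun _ => ⟨G.s e₀, hne⟩) (fun h => ⟨v, h⟩)

lemma contract_s (G : FinDigraph) (e₀ : G.E) (hne : G.s e₀ ≠ G.r e₀) (e : (G.contract e₀ hne).E) :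
    (G.contract e₀ hne).s e = cproj G e₀ hne (G.s e.1) := rfl

lemma contract_r (G : FinDigraph) (e₀ : G.E) (hne : G.s e₀ ≠ G.r e₀) (e : (G.contract e₀ hne).E)
    (h : G.r e.1 ≠ G.r e₀) : (G.contract e₀ hne).r e = ⟨G.r e.1, h⟩ := by
  show @dite _ (G.r e.1 = G.r e₀) (Classical.dec _) _ _ = _
  exact dif_neg h

lemma cproj_ne (G : FinDigraph) (e₀ : G.E) (hne : G.s e₀ ≠ G.r e₀) (v : G.V) (h : v ≠ G.r e₀) :
    cproj G e₀ hne v = ⟨v, h⟩ := by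
  unfold cproj; exact dif_neg h

lemma cproj_eq (G : FinDigraph) (e₀ : G.E) (hne : G.s e₀ ≠ G.r e₀) (v : G.V) (h : v = G.r e₀) :
    cproj G e₀ hne v = ⟨G.s e₀, hne⟩ := by
  unfold cproj; exact dif_pos h

/-- Transitivity gives positive in-degree. -/
lemma indeg_pos (G : FinDigraph) (htrans : G.Transitive) (v : G.V) :
    0 < Nat.card {e : G.E // G.r e = v} := by
  have := G.finE
  obtain ⟨l, hc, hh, hl⟩ := htrans v v
  cases l with
  | nil => simp at hh
  | cons e l' =>
    have : G.r e = v := by simpa using hh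
    have : Nonempty {e : G.E // G.r e = v} := ⟨⟨e, this⟩⟩
    exact Nat.card_pos

/-- Transitivity gives positive out-degree. -/
lemma outdeg_pos (G : FinDigraph) (htrans : G.Transitive) (v : G.V) :
    0 < Nat.card {e : G.E // G.s e = v} := by
  have := G.finE
  obtain ⟨l, hc, hh, hl⟩ := htrans v v
  have hne : l ≠ [] := by rintro rfl; simp at hh
  obtain ⟨e, he⟩ := List.getLast?_isSome.mpr hne |> Option.isSome_iff_exists.mp
  rw [he] at hl
  have : G.s e = v := by simpa using hl
  have : Nonempty {e : G.E // G.s e = v} := ⟨⟨e, this⟩⟩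
  exact Nat.card_pos

/-- In a cycle, every vertex has in-degree exactly one. -/
lemma cycle_indeg (G : FinDigraph) (hc : G.IsCycle) (v : G.V) :
    Nat.card {e : G.E // G.r e = v} = 1 := by
  obtain ⟨n, hn, fv, fe, hfe⟩ := hc
  haveI : NeZero n := ⟨hn.ne'⟩
  rw [Nat.card_eq_one_iff_unique]
  constructor
  · constructor
    rintro ⟨e1, h1⟩ ⟨e2, h2⟩
    ext
    have k1 := (hfe (fe.symm e1)).2
    have k2 := (hfe (fe.symm e2)).2
    rw [fe.apply_symm_apply] at k1 k2
    have : fv (fe.symm e1 + 1) = fv (fe.symm e2 + 1) := by rw [← k1, ← k2, h1, h2]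
    have : fe.symm e1 = fe.symm e2 := by
      have := fv.injective this
      exact add_right_cancel this
    calc e1 = fe (fe.symm e1) := (fe.apply_symm_apply e1).symm
      _ = fe (fe.symm e2) := by rw [this]
      _ = e2 := fe.apply_symm_apply e2
  · refine ⟨⟨fe (fv.symm v - 1), ?_⟩⟩
    have := (hfe (fv.symm v - 1)).2
    rw [this, sub_add_cancel, fv.apply_symm_apply]

/-- If the unique edge into its range is a loop, the (transitive) graph is a `1`-cycle. -/
lemma loop_cycle (G : FinDigraph) (htrans : G.Transitive) (e₀ : G.E)
    (hcard : Nat.card {e : G.E // G.r e = G.r e₀} = 1) (hloop : G.s e₀ = G.r e₀) :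
    G.IsCycle := by
  obtain ⟨hsub, -⟩ := Nat.card_eq_one_iff_unique.mp hcard
  have huniq : ∀ e, G.r e = G.r e₀ → e = e₀ := fun e he =>
    congrArg Subtype.val (hsub.allEq ⟨e, he⟩ ⟨e₀, rfl⟩)
  -- every path into r e₀ starts at r e₀
  have key : ∀ (k : ℕ) (l : List G.E), l.length ≤ k → ∀ src : G.V,
      IsPathFrom G.r G.s l src (G.r e₀) → src = G.r e₀ := by
    intro k
    induction k with
    | zero =>
      intro l hk src hp
      obtain rfl : l = [] := List.length_eq_zero_iff.mp (Nat.le_zero.mp hk)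
      exact absurd hp.2.1 (by simp)
    | succ k IH =>
      intro l hk src hp
      obtain ⟨hc, hh, hl⟩ := hp
      cases l with
      | nil => simp at hh
      | cons e l2 =>
        have hre : G.r e = G.r e₀ := by simpa using hh
        have he : e = e₀ := huniq e hre
        cases l2 with
        | nil =>
          have : G.s e = src := by simpa using hl
          rw [← this, he, hloop]
        | cons f l3 =>
          have hef : G.s e = G.r f := (List.isChain_cons_cons.mp hc).1
          have hc2 := (List.isChain_cons_cons.mp hc).2
          have hl2 : (f :: l3).getLast?.map G.s = some src := by
            rwa [List.getLast?_cons_cons] at hl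
          have hrf : G.r f = G.r e₀ := by rw [← hef, he, hloop]
          refine IH (f :: l3) ?_ src ⟨hc2, ?_, hl2⟩
          · simp at hk ⊢; omega
          · simp [hrf]
  have hsv : ∀ w : G.V, w = G.r e₀ := by
    intro w
    obtain ⟨l, hp⟩ := htrans w (G.r e₀)
    exact key l.length l le_rfl w hp
  haveI : Subsingleton G.V := ⟨fun a b => (hsv a).trans (hsv b).symm⟩
  haveI : Subsingleton G.E := ⟨fun a b => by
    have ha : a = e₀ := huniq a (Subsingleton.elim _ _)
    have hb : b = e₀ := huniq b (Subsingleton.elim _ _)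
    rw [ha, hb]⟩
  haveI : Unique G.V := uniqueOfSubsingleton (G.r e₀)
  haveI : Unique G.E := uniqueOfSubsingleton e₀
  exact ⟨1, Nat.one_pos, Equiv.ofUnique _ _, Equiv.ofUnique _ _,
    fun i => ⟨Subsingleton.elim _ _, Subsingleton.elim _ _⟩⟩

/-- A map all of whose fibers have cardinality one is bijective. -/
lemma bijective_of_fiber_card_one {α β : Type*} (f : α → β)
    (h : ∀ b, Nat.card {a // f a = b} = 1) : Function.Bijective f := by
  rw [Function.bijective_iff_existsUnique]
  intro b
  obtain ⟨hsub, ⟨⟨a, ha⟩⟩⟩ := Nat.card_eq_one_iff_unique.mp (h b)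
  exact ⟨a, ha, fun a' ha' => congrArg Subtype.val (hsub.allEq ⟨a', ha'⟩ ⟨a, ha⟩)⟩

/-- A transitive graph in which every vertex has in-degree one is a cycle. -/
lemma cycle_of_indeg_one (G : FinDigraph) (htrans : G.Transitive)
    (h : ∀ v : G.V, Nat.card {e : G.E // G.r e = v} = 1) : G.IsCycle := by
  classical
  have := G.finV; have := G.finE
  haveI : Fintype G.V := Fintype.ofFinite G.V
  haveI : Fintype G.E := Fintype.ofFinite G.E
  have hr : Function.Bijective G.r := bijective_of_fiber_card_one G.r h
  -- |E| = |V|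
  have hcardEV : Fintype.card G.E = Fintype.card G.V := Fintype.card_of_bijective hr
  -- all out-degrees are one
  have hsum : ∑ v : G.V, Fintype.card {e : G.E // G.s e = v} = Fintype.card G.E := by
    rw [← Fintype.card_sigma]
    exact Fintype.card_congr (Equiv.sigmaFiberEquiv G.s)
  have hout1 : ∀ v : G.V, Fintype.card {e : G.E // G.s e = v} = 1 := by
    have hle : ∀ v ∈ Finset.univ, 1 ≤ Fintype.card {e : G.E // G.s e = v} := by
      intro v _
      have := outdeg_pos G htrans v
      rwa [Nat.card_eq_fintype_card] at this
    have heq : ∑ _v : G.V, 1 = ∑ v : G.V, Fintype.card {e : G.E // G.s e = v} := by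
      rw [hsum, hcardEV]; simp
    intro v
    exact ((Finset.sum_eq_sum_iff_of_le hle).mp heq v (Finset.mem_univ v)).symm
  have hs : Function.Bijective G.s := bijective_of_fiber_card_one G.s
    (fun v => by rw [Nat.card_eq_fintype_card]; exact hout1 v)
  -- successor permutation
  set σ : G.V ≃ G.V := (Equiv.ofBijective G.s hs).symm.trans (Equiv.ofBijective G.r hr) with hσdef
  have hσ : ∀ e, σ (G.s e) = G.r e := by
    intro e
    show (Equiv.ofBijective G.r hr) ((Equiv.ofBijective G.s hs).symm (G.s e)) = G.r e
    rw [show G.s e = (Equiv.ofBijective G.s hs) e from rfl, Equiv.symm_apply_apply]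
    rfl
  -- reachability along paths
  have reach : ∀ (l : List G.E) (src tgt : G.V), IsPathFrom G.r G.s l src tgt →
      ∃ k, σ^[k] src = tgt := by
    intro l
    induction l with
    | nil => intro src tgt hp; exact absurd hp.2.1 (by simp)
    | cons e l' IH =>
      intro src tgt hp
      obtain ⟨hc, hh, hl⟩ := hp
      have hre : G.r e = tgt := by simpa using hh
      cases l' with
      | nil =>
        have hs : G.s e = src := by simpa using hl
        exact ⟨1, by simp [← hre, ← hs, hσ e]⟩
      | cons f l'' =>
        have hef : G.s e = G.r f := (List.isChain_cons_cons.mp hc).1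
        have hc2 := (List.isChain_cons_cons.mp hc).2
        have hl2 : (f :: l'').getLast?.map G.s = some src := by
          rwa [List.getLast?_cons_cons] at hl
        obtain ⟨k, hk⟩ := IH src (G.r f) ⟨hc2, by simp, hl2⟩
        refine ⟨k + 1, ?_⟩
        rw [Function.iterate_succ_apply', hk, ← hef, hσ e, hre]
  obtain ⟨v₀⟩ := G.nonemptyV
  have hex : ∃ m, 0 < m ∧ σ^[m] v₀ = v₀ := by
    obtain ⟨l, hp⟩ := htrans (σ v₀) v₀
    obtain ⟨k, hk⟩ := reach l (σ v₀) v₀ hp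
    exact ⟨k + 1, Nat.succ_pos k, by rwa [Function.iterate_succ_apply]⟩
  set n := Nat.find hex with hndef
  obtain ⟨hnpos, hnret⟩ := Nat.find_spec hex
  have hmin : ∀ m, 0 < m → m < n → σ^[m] v₀ ≠ v₀ := by
    intro m hm hmn hcon
    exact Nat.find_min hex hmn ⟨hm, hcon⟩
  haveI : NeZero n := ⟨hnpos.ne'⟩
  -- periodicity
  have period : ∀ k, σ^[k] v₀ = σ^[k % n] v₀ := by
    intro k
    induction k using Nat.strong_induction_on with
    | _ k IH =>
      by_cases hk : k < n
      · rw [Nat.mod_eq_of_lt hk]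
      · push_neg at hk
        have h1 : σ^[k] v₀ = σ^[k - n] v₀ := by
          conv_lhs => rw [show k = (k - n) + n by omega]
          rw [Function.iterate_add_apply, hnret]
        rw [h1, IH (k - n) (by omega), Nat.mod_eq_sub_mod hk]
  -- injectivity on [0, n)
  have injlt : ∀ a b, a < n → b < n → σ^[a] v₀ = σ^[b] v₀ → a = b := by
    have half : ∀ a b, a ≤ b → b < n → σ^[a] v₀ = σ^[b] v₀ → a = b := by
      intro a b hab hbn heq
      have h1 : σ^[a] (σ^[b - a] v₀) = σ^[a] v₀ := by
        rw [← Function.iterate_add_apply, show a + (b - a) = b by omega, ← heq]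
      have h2 : σ^[b - a] v₀ = v₀ := (σ.injective.iterate a) h1
      by_contra hne
      exact hmin (b - a) (by omega) (by omega) h2
    intro a b ha hb heq
    rcases le_total a b with hab | hab
    · exact half a b hab hb heq
    · exact (half b a hab ha heq.symm).symm
  have hbij : Function.Bijective (fun i : ZMod n => σ^[i.val] v₀) := by
    constructor
    · intro i j hij
      have := injlt i.val j.val (ZMod.val_lt i) (ZMod.val_lt j) hij
      exact ZMod.val_injective n this
    · intro v
      obtain ⟨l, hp⟩ := htrans v₀ v
      obtain ⟨k, hk⟩ := reach l v₀ v hp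
      refine ⟨(k : ZMod n), ?_⟩
      show σ^[((k : ℕ) : ZMod n).val] v₀ = v
      rw [ZMod.val_natCast, ← period, hk]
  set fv : ZMod n ≃ G.V := Equiv.ofBijective _ hbij with hfvdef
  have hfv : ∀ i : ZMod n, fv i = σ^[i.val] v₀ := fun i => rfl
  have hfvsucc : ∀ i : ZMod n, fv (i + 1) = σ (fv i) := by
    intro i
    rw [hfv, hfv]
    have hval : (i + 1).val = (i.val + 1) % n := by
      rw [ZMod.val_add, ZMod.val_one_eq_one_mod]
      calc (i.val + 1 % n) % n = (i.val % n + 1 % n) % n := by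
            rw [Nat.mod_eq_of_lt (ZMod.val_lt i)]
        _ = (i.val + 1) % n := (Nat.add_mod _ _ _).symm
    rw [hval, ← period, Function.iterate_succ_apply']
  set fe : ZMod n ≃ G.E := fv.trans (Equiv.ofBijective G.s hs).symm with hfedef
  have hfes : ∀ i, G.s (fe i) = fv i := by
    intro i
    show G.s ((Equiv.ofBijective G.s hs).symm (fv i)) = fv i
    exact (Equiv.ofBijective G.s hs).apply_symm_apply (fv i)
  refine ⟨n, hnpos, fv, fe, fun i => ⟨hfes i, ?_⟩⟩
  rw [← hσ (fe i), hfes i, hfvsucc i]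

end Aux

section Contract

variable (G : FinDigraph) (e₀ : G.E) (hne : G.s e₀ ≠ G.r e₀)

/-- Contraction preserves in-degrees of surviving vertices. -/
lemma contract_indeg (huniq : ∀ e, G.r e = G.r e₀ → e = e₀) (v : (G.contract e₀ hne).V) :
    Nat.card {e : (G.contract e₀ hne).E // (G.contract e₀ hne).r e = v} =
      Nat.card {e : G.E // G.r e = v.1} := by
  refine Nat.card_congr ?_
  refine ⟨fun e => ⟨e.1.1, ?_⟩, fun e => ?_, ?_, ?_⟩
  · -- forward direction
    obtain ⟨⟨e, he⟩, hre⟩ := e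
    have hrne : G.r e ≠ G.r e₀ := fun hcon => he (huniq e hcon)
    rw [contract_r G e₀ hne ⟨e, he⟩ hrne] at hre
    exact congrArg Subtype.val hre
  · -- backward direction
    obtain ⟨e, hre⟩ := e
    have hrne : G.r e ≠ G.r e₀ := by rw [hre]; exact v.2
    have he : e ≠ e₀ := fun hcon => hrne (by rw [hcon])
    refine ⟨⟨e, he⟩, ?_⟩
    rw [contract_r G e₀ hne ⟨e, he⟩ hrne]
    exact Subtype.ext hre
  · rintro ⟨⟨e, he⟩, hre⟩; rfl
  · rintro ⟨e, hre⟩; rfl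

/-- Paths transfer to the contraction. -/
lemma contract_path (huniq : ∀ e, G.r e = G.r e₀ → e = e₀) :
    ∀ (k : ℕ) (l : List G.E), l.length ≤ k → ∀ (src tgt : G.V),
      IsPathFrom G.r G.s l src tgt → ∀ (h : tgt ≠ G.r e₀),
      ∃ l', IsPathFrom (G.contract e₀ hne).r (G.contract e₀ hne).s l'
        (cproj G e₀ hne src) ⟨tgt, h⟩ := by
  intro k
  induction k with
  | zero =>
    intro l hk src tgt hp h
    obtain rfl : l = [] := List.length_eq_zero_iff.mp (Nat.le_zero.mp hk)
    exact absurd hp.2.1 (by simp)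
  | succ k IH =>
    intro l hk src tgt hp h
    obtain ⟨hc, hh, hl⟩ := hp
    cases l with
    | nil => simp at hh
    | cons e l2 =>
      have hre : G.r e = tgt := by simpa using hh
      have he0 : e ≠ e₀ := by rintro rfl; exact h hre.symm
      have hrne : G.r e ≠ G.r e₀ := by rw [hre]; exact h
      have hhead : ((G.contract e₀ hne).r ⟨e, he0⟩) = ⟨tgt, h⟩ := by
        rw [contract_r G e₀ hne ⟨e, he0⟩ hrne]; exact Subtype.ext hre
      cases l2 with
      | nil =>
        have hsrc : G.s e = src := by simpa using hl
        refine ⟨[(⟨e, he0⟩ : (G.contract e₀ hne).E)], List.isChain_singleton _, congrArg some hhead, ?_⟩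
        change some ((G.contract e₀ hne).s ⟨e, he0⟩) = _
        show some (cproj G e₀ hne (G.s e)) = _
        rw [hsrc]
      | cons f l3 =>
        have hef : G.s e = G.r f := (List.isChain_cons_cons.mp hc).1
        have hc2 := (List.isChain_cons_cons.mp hc).2
        have hl2 : (f :: l3).getLast?.map G.s = some src := by
          rwa [List.getLast?_cons_cons] at hl
        by_cases hse : G.s e = G.r e₀
        · -- the next edge is e₀; skip it
          have hf : f = e₀ := huniq f (by rw [← hef, hse])
          subst hf
          cases l3 with
          | nil =>
            -- l = [e, e₀]; src = s e₀
            have hsrc : G.s f = src := by simpa using hl2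
            refine ⟨[(⟨e, he0⟩ : (G.contract f hne).E)], List.isChain_singleton _, congrArg some hhead, ?_⟩
            change some ((G.contract f hne).s ⟨e, he0⟩) = _
            show some (cproj G f hne (G.s e)) = some (cproj G f hne src)
            rw [cproj_eq G f hne _ hse, ← hsrc, cproj_ne G f hne _ hne]
          | cons g l4 =>
            have heg : G.s f = G.r g := (List.isChain_cons_cons.mp hc2).1
            have hc3 := (List.isChain_cons_cons.mp hc2).2
            have hl3 : (g :: l4).getLast?.map G.s = some src := by
              rwa [List.getLast?_cons_cons] at hl2
            have hrg : G.r g ≠ G.r f := by rw [← heg]; exact hne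
            obtain ⟨l', hp'⟩ := IH (g :: l4) (by simp at hk ⊢; omega) src (G.r g)
              ⟨hc3, by simp, hl3⟩ hrg
            obtain ⟨hc', hh', hl'⟩ := hp'
            obtain ⟨z, l'', rfl⟩ : ∃ z l'', l' = z :: l'' := by
              cases l' with
              | nil => simp at hh'
              | cons a b => exact ⟨a, b, rfl⟩
            have hz : (G.contract f hne).r z = ⟨G.r g, hrg⟩ := Option.some.inj hh'
            refine ⟨(⟨e, he0⟩ : (G.contract f hne).E) :: z :: l'', ?_, congrArg some hhead, ?_⟩
            · refine List.isChain_cons_cons.mpr ?_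
              refine ⟨?_, hc'⟩
              show cproj G f hne (G.s e) = _
              rw [hz, cproj_eq G f hne _ hse]
              exact Subtype.ext heg
            · change Option.map _ (z :: l'').getLast? = _
              exact hl'
        · -- recurse on the tail directly
          have hrf : G.r f ≠ G.r e₀ := by rw [← hef]; exact hse
          obtain ⟨l', hp'⟩ := IH (f :: l3) (by simp at hk ⊢; omega) src (G.r f)
            ⟨hc2, by simp, hl2⟩ hrf
          obtain ⟨hc', hh', hl'⟩ := hp'
          obtain ⟨z, l'', rfl⟩ : ∃ z l'', l' = z :: l'' := by
            cases l' with
            | nil => simp at hh'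
            | cons a b => exact ⟨a, b, rfl⟩
          have hz : (G.contract e₀ hne).r z = ⟨G.r f, hrf⟩ := Option.some.inj hh'
          refine ⟨(⟨e, he0⟩ : (G.contract e₀ hne).E) :: z :: l'', ?_, congrArg some hhead, ?_⟩
          · refine List.isChain_cons_cons.mpr ?_
            refine ⟨?_, hc'⟩
            show cproj G e₀ hne (G.s e) = _
            rw [hz, cproj_ne G e₀ hne _ hse]
            exact Subtype.ext hef
          · change Option.map _ (z :: l'').getLast? = _
            exact hl'

/-- Contraction preserves transitivity. -/
lemma contract_transitive (htrans : G.Transitive) (huniq : ∀ e, G.r e = G.r e₀ → e = e₀) :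
    (G.contract e₀ hne).Transitive := by
  intro v w
  obtain ⟨l, hp⟩ := htrans v.1 w.1
  obtain ⟨l', hp'⟩ := contract_path G e₀ hne huniq l.length l le_rfl v.1 w.1 hp w.2
  refine ⟨l', ?_⟩
  rw [cproj_ne G e₀ hne v.1 v.2] at hp'; exact hp'

end Contract

lemma main_aux : ∀ (N : ℕ) (G : FinDigraph), Nat.card G.V ≤ N → G.Transitive → ¬ G.IsCycle →
    ∃ G' : FinDigraph, Relation.ReflTransGen ContractStep G G' ∧
      G'.Transitive ∧ ¬ G'.IsCycle ∧
      ∀ v : G'.V, 2 ≤ Nat.card {e : G'.E // G'.r e = v} := by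
  intro N
  induction N with
  | zero =>
    intro G hle _ _
    have := G.finV; have := G.nonemptyV
    have := Nat.card_pos (α := G.V)
    omega
  | succ N IH =>
    intro G hle htrans hnc
    by_cases hall : ∀ v : G.V, 2 ≤ Nat.card {e : G.E // G.r e = v}
    · exact ⟨G, Relation.ReflTransGen.refl, htrans, hnc, hall⟩
    · push_neg at hall
      obtain ⟨v, hv⟩ := hall
      have hcv : Nat.card {e : G.E // G.r e = v} = 1 := by
        have := indeg_pos G htrans v
        omega
      obtain ⟨hsub, ⟨⟨e₀, he₀⟩⟩⟩ := Nat.card_eq_one_iff_unique.mp hcv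
      subst he₀
      have huniq : ∀ e, G.r e = G.r e₀ → e = e₀ := fun e he =>
        congrArg Subtype.val (hsub.allEq ⟨e, he⟩ ⟨e₀, rfl⟩)
      have hne : G.s e₀ ≠ G.r e₀ := fun hl => hnc (loop_cycle G htrans e₀ hcv hl)
      have hcard' : Nat.card (G.contract e₀ hne).V ≤ N := by
        haveI := G.finV
        haveI : Fintype G.V := Fintype.ofFinite G.V
        classical
        have hlt : Nat.card {v : G.V // v ≠ G.r e₀} < Nat.card G.V := by
          simp only [Nat.card_eq_fintype_card]
          exact Fintype.card_subtype_lt (x := G.r e₀) (by simp)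
        have : Nat.card (G.contract e₀ hne).V = Nat.card {v : G.V // v ≠ G.r e₀} := rfl
        omega
      have hT' : (G.contract e₀ hne).Transitive := contract_transitive G e₀ hne htrans huniq
      have hnc' : ¬ (G.contract e₀ hne).IsCycle := by
        intro hcyc
        refine hnc (cycle_of_indeg_one G htrans fun w => ?_)
        by_cases hw : w = G.r e₀
        · rw [hw]; exact hcv
        · rw [← contract_indeg G e₀ hne huniq ⟨w, hw⟩]
          exact cycle_indeg _ hcyc ⟨w, hw⟩
      obtain ⟨G'', hsteps, hT'', hnc'', hdeg⟩ := IH (G.contract e₀ hne) hcard' hT' hnc'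
      exact ⟨G'', Relation.ReflTransGen.head ⟨e₀, hcv, hne, rfl⟩ hsteps, hT'', hnc'', hdeg⟩

theorem stmt_15 (G : FinDigraph) (htrans : G.Transitive) (hnc : ¬ G.IsCycle) :
    ∃ G' : FinDigraph, Relation.ReflTransGen ContractStep G G' ∧
      G'.Transitive ∧ ¬ G'.IsCycle ∧
      ∀ v : G'.V, 2 ≤ Nat.card {e : G'.E // G'.r e = v} := by
  exact main_aux (Nat.card G.V) G le_rfl htrans hnc
end

section
/- Let G be the graph with a single vertex v and the binary tree graph Ĝ obtained from lagging: vertices v, v₁, ..., v_{d-2} with d ≥ 3, edges f_i : v_i → v_{i-1} for 2 ≤ i ≤ d-2, f₁ : v₁ → v, a loop e at v, edges from v to each v_i, and one extra edge from v to v_{d-2}, making Ĝ in-degree 2-regular. Then any strong edge coloring of Ĝ with colors {1,2} is synchronizing: if the loop e has color i, then the word i^d is a synchronizing word for the vertex v. -/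
/-- Range map of the lag `Ĝ` of the single-vertex graph with `d ≥ 3` loops:
vertices are `Fin (d-1)`, with `0` the original vertex `v` and `i` the new vertex
`v_i` for `1 ≤ i ≤ d-2`.  Edges: `Sum.inl 0` is the loop `e` at `v`; `Sum.inl i` is
`f_i : v_i → v_{i-1}`; `Sum.inr 0` is the extra edge `v → v_{d-2}`; `Sum.inr i` is
the edge `g_i : v → v_i`. -/
def lagLoopR (d : ℕ) (hd : 3 ≤ d) :
    Fin (d - 1) ⊕ Fin (d - 1) → Fin (d - 1) :=
  fun x =>
    match x with
    | Sum.inl i => if h : i.val = 0 then ⟨0, by omega⟩ else ⟨i.val - 1, by omega⟩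
    | Sum.inr i => if h : i.val = 0 then ⟨d - 2, by omega⟩ else i

/-- Source map of the lag of the single-vertex graph with `d ≥ 3` loops. -/
def lagLoopS (d : ℕ) (hd : 3 ≤ d) :
    Fin (d - 1) ⊕ Fin (d - 1) → Fin (d - 1) :=
  fun x =>
    match x with
    | Sum.inl i => i
    | Sum.inr _ => ⟨0, by omega⟩

namespace St18

variable (d : ℕ) (hd : 3 ≤ d)

def A (w : Fin (d - 1)) : Fin (d - 1) ⊕ Fin (d - 1) :=
  if h : w.val = d - 2 then Sum.inr ⟨0, by omega⟩
  else Sum.inl ⟨w.val + 1, by have := w.isLt; omega⟩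

def B (w : Fin (d - 1)) : Fin (d - 1) ⊕ Fin (d - 1) :=
  if h : w.val = 0 then Sum.inl ⟨0, by omega⟩ else Sum.inr w

lemma R_A (w : Fin (d - 1)) : lagLoopR d hd (A d hd w) = w := by
  unfold A
  split
  · next h => simp [lagLoopR]; exact (Fin.ext h.symm)
  · next h => simp [lagLoopR]

lemma R_B (w : Fin (d - 1)) : lagLoopR d hd (B d w) = w := by
  unfold B
  split
  · next h => simp [lagLoopR]; exact (Fin.ext h.symm)
  · next h => simp [lagLoopR, h]

lemma A_ne_B (w : Fin (d - 1)) : A d hd w ≠ B d w := by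
  unfold A B
  split <;> split <;> simp [Fin.ext_iff] <;> omega

lemma mem_AB (w : Fin (d - 1)) (x : Fin (d - 1) ⊕ Fin (d - 1))
    (hx : lagLoopR d hd x = w) : x = A d hd w ∨ x = B d w := by
  unfold A B
  match x with
  | Sum.inl i =>
    simp only [lagLoopR] at hx
    split at hx
    · next h =>
      right
      rw [← hx]
      simp
      exact Fin.ext h
    · next h =>
      left
      have hi := i.isLt
      rw [← hx]
      rw [dif_neg (by simp; omega)]
      congr 1
      simp [Fin.ext_iff]
      omega
  | Sum.inr i =>
    simp only [lagLoopR] at hx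
    split at hx
    · next h =>
      left
      rw [← hx]
      simp
      exact Fin.ext h
    · next h =>
      right
      rw [← hx]
      rw [dif_neg (by simp [h])]


variable (c : Fin (d - 1) ⊕ Fin (d - 1) → Fin 2)

def vz : Fin (d - 1) := ⟨0, by omega⟩

def i0 : Fin 2 := c (Sum.inl (vz d hd))

def pick (w : Fin (d - 1)) : Fin (d - 1) ⊕ Fin (d - 1) :=
  if c (A d hd w) = i0 d hd c then A d hd w else B d w

lemma R_pick (w : Fin (d - 1)) : lagLoopR d hd (pick d hd c w) = w := by
  unfold pick
  split
  · exact R_A d hd w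
  · exact R_B d hd w

variable (hstrong : ∀ x y, lagLoopR d hd x = lagLoopR d hd y → c x = c y → x = y)

include hstrong

lemma c_pick (w : Fin (d - 1)) : c (pick d hd c w) = i0 d hd c := by
  have hne : c (A d hd w) ≠ c (B d w) := fun h =>
    A_ne_B d hd w (hstrong _ _ (by rw [R_A, R_B]) h)
  unfold pick
  split
  · assumption
  · next h =>
    have tri : ∀ a b z : Fin 2, a ≠ b → ¬a = z → b = z := by decide
    exact tri _ _ _ hne h

lemma pick_unique (w : Fin (d - 1)) (x : Fin (d - 1) ⊕ Fin (d - 1))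
    (hR : lagLoopR d hd x = w) (hc : c x = i0 d hd c) : x = pick d hd c w :=
  hstrong x _ (by rw [hR, R_pick]) (by rw [hc, c_pick d hd c hstrong])

def src (w : Fin (d - 1)) : Fin (d - 1) := lagLoopS d hd (pick d hd c w)

lemma pick_vz : pick d hd c (vz d hd) = Sum.inl (vz d hd) := by
  refine (pick_unique d hd c hstrong _ _ ?_ rfl).symm
  simp [lagLoopR, vz]

lemma src_vz : src d hd c (vz d hd) = vz d hd := by
  rw [src, pick_vz d hd c hstrong]
  simp [lagLoopS]

omit hstrong in
lemma src_cases (w : Fin (d - 1)) :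
    src d hd c w = vz d hd ∨ (src d hd c w).val = w.val + 1 := by
  unfold src pick
  split
  · unfold A
    split
    · left; simp [lagLoopS, vz]
    · right; simp [lagLoopS]
  · unfold B
    split
    · left; simp [lagLoopS, vz]
    · left; simp [lagLoopS, vz]

lemma iter_src (m : ℕ) (w : Fin (d - 1)) :
    (src d hd c)^[m] w = vz d hd ∨ ((src d hd c)^[m] w).val = w.val + m := by
  induction m with
  | zero => right; simp
  | succ m ih =>
    rw [Function.iterate_succ_apply']
    rcases ih with h | h
    · left; rw [h]; exact src_vz d hd c hstrong
    · rcases src_cases d hd c ((src d hd c)^[m] w) with h2 | h2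
      · left; exact h2
      · right; rw [h2, h]; ring

lemma iter_src_d (w : Fin (d - 1)) : (src d hd c)^[d] w = vz d hd := by
  rcases iter_src d hd c hstrong d w with h | h
  · exact h
  · have := ((src d hd c)^[d] w).isLt
    omega

def path : ℕ → Fin (d - 1) → List (Fin (d - 1) ⊕ Fin (d - 1))
  | 0, _ => []
  | m + 1, w => pick d hd c w :: path m (src d hd c w)


omit hstrong in
lemma path_head (m : ℕ) (w : Fin (d - 1)) (h : path d hd c m w ≠ []) :
    lagLoopR d hd ((path d hd c m w).head h) = w := by
  match m with
  | 0 => simp [path] at h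
  | m + 1 => simp only [path, List.head_cons]; exact R_pick d hd c w

lemma path_map (m : ℕ) (w : Fin (d - 1)) :
    (path d hd c m w).map c = List.replicate m (i0 d hd c) := by
  induction m generalizing w with
  | zero => simp [path]
  | succ m ih =>
    simp only [path, List.map_cons, List.replicate_succ, ih,
      c_pick d hd c hstrong]

omit hstrong in
lemma path_head? (m : ℕ) (w : Fin (d - 1)) (y : Fin (d - 1) ⊕ Fin (d - 1))
    (h : (path d hd c m w).head? = some y) : lagLoopR d hd y = w := by
  match m with
  | 0 => simp [path] at h
  | m + 1 =>
    simp only [path, List.head?_cons, Option.some.injEq] at h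
    rw [← h]
    exact R_pick d hd c w

omit hstrong in
lemma path_chain (m : ℕ) (w : Fin (d - 1)) :
    List.Chain' (fun x y => lagLoopS d hd x = lagLoopR d hd y)
      (path d hd c m w) := by
  induction m generalizing w with
  | zero => simp [path, List.Chain']
  | succ m ih =>
    simp only [path]
    refine List.isChain_cons.mpr ⟨?_, ih _⟩
    intro y hy
    rw [path_head? d hd c m (src d hd c w) y hy]
    rfl

omit hstrong in
lemma path_last (m : ℕ) (w : Fin (d - 1)) :
    (path d hd c (m + 1) w).getLast?.map (lagLoopS d hd)
      = some ((src d hd c)^[m + 1] w) := by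
  induction m generalizing w with
  | zero => simp [path]; rfl
  | succ m ih =>
    have : path d hd c (m + 2) w
        = pick d hd c w :: path d hd c (m + 1) (src d hd c w) := rfl
    rw [this]
    rcases hne : path d hd c (m + 1) (src d hd c w) with _ | ⟨z, t⟩
    · simp [path] at hne
    · rw [List.getLast?_cons_cons, ← hne, ih, ← Function.iterate_succ_apply]

omit hstrong in
lemma path_last' (m : ℕ) (hm : m ≠ 0) (w : Fin (d - 1)) :
    (path d hd c m w).getLast?.map (lagLoopS d hd)
      = some ((src d hd c)^[m] w) := by
  match m with
  | 0 => exact absurd rfl hm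
  | m + 1 => exact path_last d hd c m w

lemma path_eq (l : List (Fin (d - 1) ⊕ Fin (d - 1))) (m : ℕ) (w : Fin (d - 1))
    (hch : List.Chain' (fun x y => lagLoopS d hd x = lagLoopR d hd y) l)
    (hmap : l.map c = List.replicate m (i0 d hd c))
    (hhd : ∀ h : l ≠ [], lagLoopR d hd (l.head h) = w) :
    l = path d hd c m w := by
  induction l generalizing m w with
  | nil =>
    have := congrArg List.length hmap
    simp at this
    rw [← this]
    rfl
  | cons x t ih =>
    match m with
    | 0 => simp at hmap
    | m + 1 =>
      rw [List.replicate_succ] at hmap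
      simp only [List.map_cons, List.cons.injEq] at hmap
      obtain ⟨hcx, hmt⟩ := hmap
      have hRx : lagLoopR d hd x = w := hhd (by simp)
      have hx : x = pick d hd c w := pick_unique d hd c hstrong w x hRx hcx
      obtain ⟨hh, hch'⟩ := List.isChain_cons.mp hch
      have ht : t = path d hd c m (src d hd c w) := by
        refine ih m (src d hd c w) hch' hmt ?_
        intro h
        have hy := hh (t.head h) (by rw [List.head?_eq_head h]; rfl)
        rw [← hy, hx]
        rfl
      rw [hx, ht]
      rfl

end St18

theorem stmt_18 (d : ℕ) (hd : 3 ≤ d)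
    (c : Fin (d - 1) ⊕ Fin (d - 1) → Fin 2)
    (hstrong : ∀ x y, lagLoopR d hd x = lagLoopR d hd y → c x = c y → x = y) :
    -- the word `i^d`, where `i` is the color of the loop `e`, is synchronizing for `v = 0`:
    -- for every vertex `w`, there is a unique backward path with range `w` and color `i^d`,
    -- and every such path has source `v = 0`.
    (∀ w : Fin (d - 1),
      ∃! l : List (Fin (d - 1) ⊕ Fin (d - 1)),
        List.Chain' (fun x y => lagLoopS d hd x = lagLoopR d hd y) l ∧
        l.map c = List.replicate d (c (Sum.inl ⟨0, by omega⟩)) ∧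
        ∀ h : l ≠ [], lagLoopR d hd (l.head h) = w) ∧
    (∀ (w : Fin (d - 1)) (l : List (Fin (d - 1) ⊕ Fin (d - 1))),
      List.Chain' (fun x y => lagLoopS d hd x = lagLoopR d hd y) l →
      l.map c = List.replicate d (c (Sum.inl ⟨0, by omega⟩)) →
      (∀ h : l ≠ [], lagLoopR d hd (l.head h) = w) →
      l.getLast?.map (lagLoopS d hd) = some ⟨0, by omega⟩) := by
  have hz : (Sum.inl ⟨0, by omega⟩ : Fin (d-1) ⊕ Fin (d-1)) = Sum.inl (St18.vz d hd) := rfl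
  constructor
  · intro w
    refine ⟨St18.path d hd c d w,
      ⟨St18.path_chain d hd c d w, St18.path_map d hd c hstrong d w, ?_⟩, ?_⟩
    · intro h; exact St18.path_head d hd c d w h
    · rintro l ⟨h1, h2, h3⟩
      exact St18.path_eq d hd c hstrong l d w h1 h2 h3
  · intro w l h1 h2 h3
    rw [St18.path_eq d hd c hstrong l d w h1 h2 h3]
    rw [St18.path_last' d hd c d (by omega) w, St18.iter_src_d d hd c hstrong]
    rfl
end

section
/- Let G be a transitive directed graph and S = (S_v, S_e) a TCK family on a Hilbert space H with Σ_v S_v = I. Let 𝔖 be the WOT-closed algebra generated by S. If for every vertex v there exists a vertex w such that S_v 𝔖 S_w = S_v B(H) S_w, then 𝔖 = B(H). -/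
set_option linter.unusedVariables false

open ContinuousLinearMap in
open scoped InnerProductSpace in
private lemma test2 {V E : Type*} (r s : E → V)
    {H : Type*} [NormedAddCommGroup H] [InnerProductSpace ℂ H] [CompleteSpace H]
    (Sv : V → H →L[ℂ] H) (Se : E → H →L[ℂ] H)
    (hproj : ∀ v, IsSelfAdjoint (Sv v) ∧ Sv v * Sv v = Sv v)
    (htoep : ∀ (v : V) (F : Finset E), (∀ e ∈ F, r e = v) →
      (Sv v - ∑ e ∈ F, Se e * ContinuousLinearMap.adjoint (Se e)).IsPositive)
    (e : E) : Sv (r e) * Se e = Se e := by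
  have hsa : adjoint (Sv (r e)) = Sv (r e) := isSelfAdjoint_iff'.mp (hproj (r e)).1
  have hz : ∀ y : H, adjoint (Se e) y = adjoint (Se e) (Sv (r e) y) := by
    intro y
    have key : adjoint (Se e) (y - Sv (r e) y) = 0 := by
      set z := y - Sv (r e) y with hzdef
      have hPz : Sv (r e) z = 0 := by
        have h3 := (hproj (r e)).2
        simp [hzdef, map_sub, show Sv (r e) (Sv (r e) y) = (Sv (r e) * Sv (r e)) y from rfl, h3]
      have h2 := (htoep (r e) {e} (by simp)).2 z
      rw [reApplyInnerSelf_apply] at h2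
      have hQ : ⟪(Se e * adjoint (Se e)) z, z⟫_ℂ = (‖adjoint (Se e) z‖ : ℂ) ^ 2 := by
        rw [ContinuousLinearMap.mul_apply, ← adjoint_inner_right]
        exact inner_self_eq_norm_sq_to_K _
      have hexp : ((Sv (r e) - ∑ f ∈ ({e} : Finset E), Se f * adjoint (Se f)) z) =
          Sv (r e) z - (Se e * adjoint (Se e)) z := by simp
      rw [hexp, hPz, zero_sub, inner_neg_left, hQ] at h2
      have h4 : ‖adjoint (Se e) z‖ ^ 2 ≤ 0 := by
        simpa [← Complex.ofReal_pow] using h2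
      have h5 : ‖adjoint (Se e) z‖ = 0 := by nlinarith [norm_nonneg (adjoint (Se e) z)]
      simpa using h5
    rw [map_sub] at key
    exact (sub_eq_zero.mp key).symm ▸ rfl
  ext x
  apply ext_inner_left ℂ
  intro v
  have e1 : ⟪v, (Sv (r e) * Se e) x⟫_ℂ = ⟪v, Sv (r e) (Se e x)⟫_ℂ := rfl
  have e2 : ⟪v, Sv (r e) (Se e x)⟫_ℂ = ⟪Sv (r e) v, Se e x⟫_ℂ := by
    conv_rhs => rw [← hsa]
    rw [adjoint_inner_left]
  have e3 : ⟪Sv (r e) v, Se e x⟫_ℂ = ⟪adjoint (Se e) (Sv (r e) v), x⟫_ℂ :=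
    (adjoint_inner_left (Se e) _ _).symm
  have e4 : ⟪adjoint (Se e) v, x⟫_ℂ = ⟪v, Se e x⟫_ℂ := adjoint_inner_left (Se e) _ _
  rw [e1, e2, e3, ← hz v, e4]


open ContinuousLinearMap in
private lemma path_head' {V E : Type*} (r : E → V)
    {H : Type*} [NormedAddCommGroup H] [InnerProductSpace ℂ H] [CompleteSpace H]
    (Sv : V → H →L[ℂ] H) (Se : E → H →L[ℂ] H)
    (hL1 : ∀ e, Sv (r e) * Se e = Se e)
    (l : List E) (e : E) (he : l.head? = some e) :
    Sv (r e) * (l.map Se).prod = (l.map Se).prod := by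
  cases l with
  | nil => simp at he
  | cons a t =>
    simp only [List.head?_cons, Option.some.injEq] at he
    subst he
    simp only [List.map_cons, List.prod_cons, ← mul_assoc, hL1]

open ContinuousLinearMap in
private lemma path_prod' {V E : Type*} (r s : E → V)
    {H : Type*} [NormedAddCommGroup H] [InnerProductSpace ℂ H] [CompleteSpace H]
    (Sv : V → H →L[ℂ] H) (Se : E → H →L[ℂ] H)
    (hL1 : ∀ e, Sv (r e) * Se e = Se e)
    (hisom : ∀ e : E, adjoint (Se e) * Se e = Sv (s e)) :
    ∀ (l : List E) (src : V), List.Chain' (fun e f => s e = r f) l →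
      l.getLast?.map s = some src →
      adjoint ((l.map Se).prod) * (l.map Se).prod = Sv src := by
  intro l
  induction l with
  | nil => intro src _ h; simp at h
  | cons e t ih =>
    intro src hch hlast
    cases t with
    | nil =>
      simp only [List.getLast?_singleton, Option.map_some, Option.some.injEq] at hlast
      simp only [List.map_cons, List.map_nil, List.prod_cons, List.prod_nil, mul_one]
      rw [hisom e, hlast]
    | cons f t' =>
      obtain ⟨hef, hch'⟩ := List.isChain_cons_cons.mp hch
      have hlast' : ((f :: t').getLast?).map s = some src := by
        rwa [List.getLast?_cons_cons] at hlast
      set Q := ((f :: t').map Se).prod with hQ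
      have hprod : ((e :: f :: t').map Se).prod = Se e * Q := by
        simp [hQ, List.map_cons, List.prod_cons]
      rw [hprod]
      have hadj : adjoint (Se e * Q) = adjoint Q * adjoint (Se e) := by
        rw [← star_eq_adjoint, ← star_eq_adjoint, ← star_eq_adjoint, star_mul]
      rw [hadj]
      have : adjoint Q * adjoint (Se e) * (Se e * Q)
          = adjoint Q * (adjoint (Se e) * Se e * Q) := by
        simp only [mul_assoc]
      rw [this, hisom e, hef, path_head' r Sv Se hL1 (f :: t') f rfl]
      exact ih src hch' hlast'

private lemma prod_mem' {V E : Type*}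
    {H : Type*} [NormedAddCommGroup H] [InnerProductSpace ℂ H] [CompleteSpace H]
    (Sv : V → H →L[ℂ] H) (Se : E → H →L[ℂ] H) :
    ∀ l : List E, (l.map Se).prod ∈ Algebra.adjoin ℂ (Set.range Sv ∪ Set.range Se) := by
  intro l
  induction l with
  | nil => simp only [List.map_nil, List.prod_nil]; exact one_mem _
  | cons e t ih =>
    simp only [List.map_cons, List.prod_cons]
    exact mul_mem (Algebra.subset_adjoin (Or.inr ⟨e, rfl⟩)) ih


open ContinuousLinearMap in
private lemma wot_mul_cont' {H : Type*} [NormedAddCommGroup H] [InnerProductSpace ℂ H]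
    [CompleteSpace H] (B C : H →L[ℂ] H) :
    Continuous (fun X : H →WOT[ℂ] H =>
      ((ContinuousLinearMapWOT.linearEquiv ℂ).symm : (H →L[ℂ] H) ≃ₗ[ℂ] (H →WOT[ℂ] H)) (B * ((((ContinuousLinearMapWOT.linearEquiv ℂ).symm : (H →L[ℂ] H) ≃ₗ[ℂ] (H →WOT[ℂ] H))).symm X) * C)) := by
  apply ContinuousLinearMapWOT.continuous_of_dual_apply_continuous
  intro x y
  exact ContinuousLinearMapWOT.continuous_dual_apply (C x) (y.comp B)

open ContinuousLinearMap in
private lemma smul_mem_closure' {H : Type*} [NormedAddCommGroup H] [InnerProductSpace ℂ H]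
    [CompleteSpace H] (𝒜 : Subalgebra ℂ (H →L[ℂ] H)) (B C T : H →L[ℂ] H)
    (hB : B ∈ 𝒜) (hC : C ∈ 𝒜)
    (hT : ((ContinuousLinearMapWOT.linearEquiv ℂ).symm : (H →L[ℂ] H) ≃ₗ[ℂ] (H →WOT[ℂ] H)) T ∈ closure (((ContinuousLinearMapWOT.linearEquiv ℂ).symm : (H →L[ℂ] H) ≃ₗ[ℂ] (H →WOT[ℂ] H)) '' (𝒜 : Set (H →L[ℂ] H)))) :
    ((ContinuousLinearMapWOT.linearEquiv ℂ).symm : (H →L[ℂ] H) ≃ₗ[ℂ] (H →WOT[ℂ] H)) (B * T * C) ∈ closure (((ContinuousLinearMapWOT.linearEquiv ℂ).symm : (H →L[ℂ] H) ≃ₗ[ℂ] (H →WOT[ℂ] H)) '' (𝒜 : Set (H →L[ℂ] H))) := by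
  set W := ((ContinuousLinearMapWOT.linearEquiv ℂ).symm : (H →L[ℂ] H) ≃ₗ[ℂ] (H →WOT[ℂ] H))
  set φ : (H →WOT[ℂ] H) → (H →WOT[ℂ] H) := fun X => W (B * (W.symm X) * C) with hφ
  have himg : φ '' (W '' (𝒜 : Set (H →L[ℂ] H))) ⊆ W '' (𝒜 : Set (H →L[ℂ] H)) := by
    rintro _ ⟨_, ⟨M, hM, rfl⟩, rfl⟩
    exact ⟨B * M * C, mul_mem (mul_mem hB hM) hC, by simp [hφ]⟩
  have h1 : φ (W T) ∈ closure (φ '' (W '' (𝒜 : Set (H →L[ℂ] H)))) :=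
    (image_closure_subset_closure_image (wot_mul_cont' B C)) ⟨W T, hT, rfl⟩
  have h2 : φ (W T) = W (B * T * C) := by simp [hφ]
  exact h2 ▸ (closure_mono himg) h1


open ContinuousLinearMap
open scoped InnerProductSpace


theorem stmt_19 {V E : Type*} (r s : E → V)
    -- `G` is transitive
    (htrans : ∀ v w : V, ∃ l : List E, IsPathFrom r s l v w)
    {H : Type*} [NormedAddCommGroup H] [InnerProductSpace ℂ H] [CompleteSpace H]
    (Sv : V → H →L[ℂ] H) (Se : E → H →L[ℂ] H)
    -- the `Sv v` are pairwise orthogonal projections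
    (hproj : ∀ v, IsSelfAdjoint (Sv v) ∧ Sv v * Sv v = Sv v)
    (horth : ∀ v w, v ≠ w → Sv v * Sv w = 0)
    -- `Se e* Se e = Sv (s e)`
    (hisom : ∀ e : E, ContinuousLinearMap.adjoint (Se e) * Se e = Sv (s e))
    -- `∑_{e ∈ F} Se e Se e* ≤ Sv v` for finite `F ⊆ r⁻¹(v)`
    (htoep : ∀ (v : V) (F : Finset E), (∀ e ∈ F, r e = v) →
      (Sv v - ∑ e ∈ F, Se e * ContinuousLinearMap.adjoint (Se e)).IsPositive)
    -- `∑_v Sv v = I` in the strong operator topology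
    (hsum : ∀ x : H, HasSum (fun v => Sv v x) x)
    -- `𝔖` is the WOT-closure of the algebra generated by the family
    (𝔖 : Set (H →L[ℂ] H))
    (h𝔖 : 𝔖 = (ContinuousLinearMapWOT.ofCLM : (H →L[ℂ] H) → (H →WOT[ℂ] H)) ⁻¹'
      closure ((ContinuousLinearMapWOT.ofCLM : (H →L[ℂ] H) → (H →WOT[ℂ] H)) ''
        ((Algebra.adjoin ℂ (Set.range Sv ∪ Set.range Se) : Subalgebra ℂ (H →L[ℂ] H)) :
          Set (H →L[ℂ] H))))
    -- corner hypothesis: `Sv v 𝔖 Sv w = Sv v B(H) Sv w`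
    (hcorner : ∀ v : V, ∃ w : V,
      (fun T => Sv v * T * Sv w) '' 𝔖 =
        Set.range (fun A : H →L[ℂ] H => Sv v * A * Sv w)) :
    𝔖 = Set.univ := by
  classical
  set 𝒜 : Subalgebra ℂ (H →L[ℂ] H) := Algebra.adjoin ℂ (Set.range Sv ∪ Set.range Se) with h𝒜
  set W := ((ContinuousLinearMapWOT.linearEquiv ℂ).symm : (H →L[ℂ] H) ≃ₗ[ℂ] (H →WOT[ℂ] H)) with hW
  -- L1
  have hL1 : ∀ e, Sv (r e) * Se e = Se e := fun e => test2 r s Sv Se hproj htoep e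
  have hsv : ∀ v, Sv v ∈ 𝒜 := fun v => Algebra.subset_adjoin (Or.inl ⟨v, rfl⟩)
  -- corner membership
  have hA : ∀ (A : H →L[ℂ] H) (v' w' : V), Sv v' * A * Sv w' ∈ 𝔖 := by
    intro A v' w'
    obtain ⟨w, hw⟩ := hcorner v'
    obtain ⟨l, hch, hhd, hlast⟩ := htrans w' w
    set P := (l.map Se).prod with hPdef
    have hPP : adjoint P * P = Sv w' := path_prod' r s Sv Se hL1 hisom l w' hch hlast
    have hwP : Sv w * P = P := by
      cases l with
      | nil => simp at hhd
      | cons e t =>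
        simp only [List.head?_cons, Option.map_some, Option.some.injEq] at hhd
        exact hhd ▸ path_head' r Sv Se hL1 (e :: t) e rfl
    have hPmem : P ∈ 𝒜 := prod_mem' Sv Se l
    have hmem : Sv v' * (A * adjoint P) * Sv w ∈
        Set.range (fun A : H →L[ℂ] H => Sv v' * A * Sv w) := ⟨A * adjoint P, rfl⟩
    rw [← hw] at hmem
    obtain ⟨T, hT, hTeq⟩ := hmem
    simp only at hTeq
    have key : Sv v' * A * Sv w' = Sv v' * T * (Sv w * P) := by
      calc Sv v' * A * Sv w' = Sv v' * A * (adjoint P * P) := by rw [hPP]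
        _ = Sv v' * (A * adjoint P) * P := by simp only [mul_assoc]
        _ = Sv v' * (A * adjoint P) * (Sv w * P) := by rw [hwP]
        _ = Sv v' * (A * adjoint P) * Sv w * P := by rw [mul_assoc _ (Sv w) P]
        _ = Sv v' * T * Sv w * P := by rw [hTeq]
        _ = Sv v' * T * (Sv w * P) := by rw [mul_assoc _ (Sv w) P]
    rw [key, h𝔖, Set.mem_preimage]
    exact smul_mem_closure' 𝒜 (Sv v') (Sv w * P) T (hsv v') (mul_mem (hsv w) hPmem)
      (by rw [h𝔖] at hT; exact hT)
  -- conclude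
  rw [Set.eq_univ_iff_forall]
  intro A
  rw [h𝔖, Set.mem_preimage]
  set M : Submodule ℂ (H →WOT[ℂ] H) :=
    (Subalgebra.toSubmodule 𝒜).map (W : (H →L[ℂ] H) →ₗ[ℂ] (H →WOT[ℂ] H)) with hM
  have hMcoe : (M : Set (H →WOT[ℂ] H)) = W '' (𝒜 : Set (H →L[ℂ] H)) := by
    simp [hM, Submodule.map_coe]
  have hclos : closure (W '' (𝒜 : Set (H →L[ℂ] H))) = (M.topologicalClosure : Set _) := by
    rw [Submodule.topologicalClosure_coe, hMcoe]
  set f : Finset V → (H →WOT[ℂ] H) :=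
    fun F => W (∑ p ∈ F ×ˢ F, Sv p.1 * A * Sv p.2) with hf
  have hfmem : ∀ F, f F ∈ closure (W '' (𝒜 : Set (H →L[ℂ] H))) := by
    intro F
    rw [hclos]
    have : f F = ∑ p ∈ F ×ˢ F, W (Sv p.1 * A * Sv p.2) := by
      rw [hf]; exact map_sum W _ _
    rw [this]
    refine sum_mem fun p _ => ?_
    have := hA A p.1 p.2
    rw [h𝔖, Set.mem_preimage] at this
    rw [← SetLike.mem_coe, ← hclos]
    exact this
  have htend : Filter.Tendsto f Filter.atTop (nhds (W A)) := by
    rw [ContinuousLinearMapWOT.tendsto_iff_forall_dual_apply_tendsto]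
    intro x y
    set u := (InnerProductSpace.toDual ℂ H).symm y with hu
    have hy : ∀ z : H, y z = ⟪u, z⟫_ℂ := fun z =>
      (InnerProductSpace.toDual_symm_apply).symm
    have hval : ∀ F : Finset V,
        y (f F x) = ⟪∑ v ∈ F, Sv v u, A (∑ w ∈ F, Sv w x)⟫_ℂ := by
      intro F
      have h1 : f F x = ∑ p ∈ F ×ˢ F, Sv p.1 (A (Sv p.2 x)) := by
        rw [hf]
        show (∑ p ∈ F ×ˢ F, Sv p.1 * A * Sv p.2) x = _
        rw [ContinuousLinearMap.sum_apply]
        exact Finset.sum_congr rfl fun p _ => rfl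
      rw [hy, h1]
      calc ⟪u, ∑ p ∈ F ×ˢ F, Sv p.1 (A (Sv p.2 x))⟫_ℂ
          = ∑ p ∈ F ×ˢ F, ⟪Sv p.1 u, A (Sv p.2 x)⟫_ℂ := by
            rw [inner_sum]
            refine Finset.sum_congr rfl fun p _ => ?_
            conv_lhs => rw [show Sv p.1 = adjoint (Sv p.1) from
              (isSelfAdjoint_iff'.mp (hproj p.1).1).symm]
            exact adjoint_inner_right _ _ _
        _ = ∑ v ∈ F, ∑ w ∈ F, ⟪Sv v u, A (Sv w x)⟫_ℂ := by rw [Finset.sum_product]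
        _ = ⟪∑ v ∈ F, Sv v u, A (∑ w ∈ F, Sv w x)⟫_ℂ := by
            rw [sum_inner]
            exact (Finset.sum_congr rfl fun v _ => by rw [map_sum, inner_sum]).symm
    have hxx : Filter.Tendsto (fun F : Finset V => A (∑ w ∈ F, Sv w x))
        Filter.atTop (nhds (A x)) := (A.continuous.tendsto x).comp (hsum x)
    have hlim : Filter.Tendsto
        (fun F : Finset V => (⟪∑ v ∈ F, Sv v u, A (∑ w ∈ F, Sv w x)⟫_ℂ))
        Filter.atTop (nhds (⟪u, A x⟫_ℂ)) := Filter.Tendsto.inner (hsum u) hxx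
    have hfin : y (W A x) = ⟪u, A x⟫_ℂ := hy _
    rw [hfin]
    exact Filter.Tendsto.congr (fun F => (hval F).symm) hlim
  haveI : (Filter.atTop : Filter (Finset V)).NeBot := Filter.atTop_neBot
  exact isClosed_closure.mem_of_tendsto htend (Filter.Eventually.of_forall hfmem)
end
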